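/- arXiv:1608.03715 — 6 statements merged into one kernel-verified Lean document; each statement's English description precedes it below -/
import Mathlib

section
/- Let G be a finite connected graph with vertex set V, edge relation ~, and edge length δ>0, and let d denote the induced path metric. Let K ⊆ V be a nonempty set with boundary ∂K = {y ∉ K : ∃x∈K, y~x}, and suppose every vertex of K is connected within K to some boundary vertex. If u,v : V → ℝ satisfy Δ∞u(x) ≥ 0 and Δ∞v(x) ≤ 0 for all x ∈ K, where Δ∞w(x) = max_{y~x}(w(y)−w(x)) + min_{y~x}(w(y)−w(x)), and u ≤ v on ∂K, then u ≤ v on K ∪ ∂K. -/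
open Filter Topology
open scoped Classical

noncomputable section

variable {V : Type*}

/-- A path from `x` to `y` whose interior vertices `l` all lie in `K`. -/
def pathIn (adj : V → V → Prop) (K : Set V) (x y : V) (l : List V) : Prop :=
  List.Chain adj x (l ++ [y]) ∧ ∀ z ∈ l, z ∈ K

/-- The restricted path metric `d_K` (edge length `δ`), via paths with interior in `K`. -/
def dK (adj : V → V → Prop) (K : Set V) (δ : ℝ) (x y : V) : ℝ :=
  if x = y then 0
  else sInf {r : ℝ | ∃ l : List V, pathIn adj K x y l ∧ r = δ * (l.length + 1)}

/-- The boundary of a vertex set `K`. -/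
def bdry (adj : V → V → Prop) (K : Set V) : Set V :=
  {y | y ∉ K ∧ ∃ x ∈ K, adj x y}

/-- The graph infinity Laplacian. -/
def lapInf (adj : V → V → Prop) (u : V → ℝ) (x : V) : ℝ :=
  sSup ((fun y => u y - u x) '' {y | adj x y}) +
    sInf ((fun y => u y - u x) '' {y | adj x y})

/-- The local Lipschitz constant `F(u,x)` at a vertex `x`. -/
def locLip (adj : V → V → Prop) (δ : ℝ) (u : V → ℝ) (x : V) : ℝ :=
  sSup ((fun y => |u x - u y| / δ) '' {y | adj x y})

/-- The Lipschitz constant of `u` over the set `A`, measured in the metric `d_K`. -/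
def LipOn (adj : V → V → Prop) (K A : Set V) (δ : ℝ) (u : V → ℝ) : ℝ :=
  sSup {r : ℝ | ∃ x ∈ A, ∃ y ∈ A, x ≠ y ∧ r = |u x - u y| / dK adj K δ x y}

/-- `K` is connected: any two points of `K ∪ ∂K` are joined by a path through `K`. -/
def connectedIn (adj : V → V → Prop) (K : Set V) : Prop :=
  ∀ x ∈ K ∪ bdry adj K, ∀ y ∈ K ∪ bdry adj K, x ≠ y → ∃ l, pathIn adj K x y l

/-!
Let `M` be the maximum of `u - v` over `K ∪ ∂K`, and among the maximisers pick `x₀` with `u x₀`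
largest. At a maximiser `x ∈ K` every increment of `u` towards a neighbour is at most the
corresponding increment of `v`, so the largest and smallest increments of `u` are bounded by
those of `v`; the sign conditions on `Δ∞u` and `Δ∞v` force equality. The neighbour realising the
largest increment of `u` is then again a maximiser, so by the choice of `x₀` that increment is
`≤ 0`, which makes `u` and `v` constant on the neighbourhood of `x` whenever `u x = u x₀`. This
propagates along a path from `x₀` through `K` to `∂K`, where `u ≤ v`; hence `M ≤ 0`.
-/

section

variable {adj : V → V → Prop} {K : Set V}

lemma mem_union_bdry_of_adj {x y : V} (hx : x ∈ K) (hxy : adj x y) : y ∈ K ∪ bdry adj K := by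
  by_cases hy : y ∈ K
  · exact Or.inl hy
  · exact Or.inr ⟨hy, x, hx, hxy⟩

lemma pathIn.propagate {P : V → Prop} (hstep : ∀ x ∈ K, P x → ∀ y, adj x y → P y) :
    ∀ {l : List V} {x y : V}, pathIn adj K x y l → x ∈ K → P x → P y
  | [], x, _, ⟨hch, _⟩, hx, hPx => hstep x hx hPx _ (List.isChain_cons_cons.1 hch).1
  | z :: _, x, _, ⟨hch, hl⟩, hx, hPx =>
    have hzK : z ∈ K := hl z List.mem_cons_self
    have hrest := List.isChain_cons_cons.1 hch
    pathIn.propagate hstep ⟨hrest.2, fun w hw => hl w (List.mem_cons_of_mem _ hw)⟩ hzK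
      (hstep x hx hPx z hrest.1)

lemma sSup_image_mono [Finite V] {N : Set V} {f g : V → ℝ} (hN : N.Nonempty)
    (h : ∀ y ∈ N, f y ≤ g y) : sSup (f '' N) ≤ sSup (g '' N) :=
  csSup_le (hN.image f) <| by
    rintro _ ⟨y, hy, rfl⟩
    exact (h y hy).trans (le_csSup (Set.toFinite _).bddAbove ⟨y, hy, rfl⟩)

lemma sInf_image_mono [Finite V] {N : Set V} {f g : V → ℝ} (hN : N.Nonempty)
    (h : ∀ y ∈ N, f y ≤ g y) : sInf (f '' N) ≤ sInf (g '' N) :=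
  le_csInf (hN.image g) <| by
    rintro _ ⟨y, hy, rfl⟩
    exact (csInf_le (Set.toFinite (f '' N)).bddBelow ⟨y, hy, rfl⟩).trans (h y hy)

theorem eq_of_adj_of_lapInf_of_isMax [Finite V] {u v : V → ℝ} {x : V}
    (hu : 0 ≤ lapInf adj u x) (hv : lapInf adj v x ≤ 0)
    (hmax : ∀ y, adj x y → u y - v y ≤ u x - v x)
    (htie : ∀ y, adj x y → u y - v y = u x - v x → u y ≤ u x) :
    ∀ y, adj x y → u y = u x ∧ v y = v x := by
  intro y hy
  set N := {y | adj x y}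
  have hN : N.Nonempty := ⟨y, hy⟩
  have hfin : ∀ f : V → ℝ, (f '' N).Finite := fun _ => Set.toFinite _
  have hmono : ∀ z ∈ N, u z - u x ≤ v z - v x := fun z hz => by linarith [hmax z hz]
  set Su := sSup ((fun z => u z - u x) '' N)
  set su := sInf ((fun z => u z - u x) '' N)
  set Sv := sSup ((fun z => v z - v x) '' N)
  set sv := sInf ((fun z => v z - v x) '' N)
  have hSu_le : Su ≤ Sv := sSup_image_mono hN hmono
  have hsu_le : su ≤ sv := sInf_image_mono hN hmono
  have hlap_u : 0 ≤ Su + su := hu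
  have hlap_v : Sv + sv ≤ 0 := hv
  have hyu : su ≤ u y - u x ∧ u y - u x ≤ Su :=
    ⟨csInf_le (hfin _).bddBelow ⟨y, hy, rfl⟩, le_csSup (hfin _).bddAbove ⟨y, hy, rfl⟩⟩
  have hyv : sv ≤ v y - v x ∧ v y - v x ≤ Sv :=
    ⟨csInf_le (hfin _).bddBelow ⟨y, hy, rfl⟩, le_csSup (hfin _).bddAbove ⟨y, hy, rfl⟩⟩
  -- the neighbour realising `Su` is again a maximiser of `u - v`, so `Su ≤ 0`
  obtain ⟨z, hz, hzSu⟩ := (hN.image _).csSup_mem (hfin fun z => u z - u x)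
  have hzv : v z - v x ≤ Sv := le_csSup (hfin _).bddAbove ⟨z, hz, rfl⟩
  have hz_tie : u z - v z = u x - v x := le_antisymm (hmax z hz) (by simp only at hzSu; linarith)
  have hSu_nonpos : Su ≤ 0 := by simp only at hzSu; linarith [htie z hz hz_tie]
  constructor <;> linarith

end

theorem stmt0_general [Fintype V] (adj : V → V → Prop) (K : Set V)
    (hconn : ∀ x ∈ K, ∃ y ∈ bdry adj K, ∃ l, pathIn adj K x y l)
    (u v : V → ℝ)
    (hu : ∀ x ∈ K, 0 ≤ lapInf adj u x)
    (hv : ∀ x ∈ K, lapInf adj v x ≤ 0)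
    (hb : ∀ x ∈ bdry adj K, u x ≤ v x) :
    ∀ x ∈ K ∪ bdry adj K, u x ≤ v x := by
  intro x hx
  set S := K ∪ bdry adj K
  obtain ⟨x₁, hx₁, hx₁max⟩ := S.exists_max_image (fun z => u z - v z) S.toFinite ⟨x, hx⟩
  set M := u x₁ - v x₁
  obtain ⟨x₀, ⟨hx₀S, hx₀M⟩, hx₀max⟩ :=
    {z ∈ S | u z - v z = M}.exists_max_image u (Set.toFinite _) ⟨x₁, hx₁, rfl⟩
  have hstep : ∀ z ∈ K, (u z - v z = M ∧ u z = u x₀) →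
      ∀ w, adj z w → (u w - v w = M ∧ u w = u x₀) := by
    rintro z hz ⟨hzM, hzu⟩ w hw
    obtain ⟨huw, hvw⟩ := eq_of_adj_of_lapInf_of_isMax (hu z hz) (hv z hz)
      (fun y hy => hzM ▸ hx₁max y (mem_union_bdry_of_adj hz hy))
      (fun y hy hyM => hzu ▸ hx₀max y ⟨mem_union_bdry_of_adj hz hy, hyM.trans hzM⟩) w hw
    exact ⟨by rw [huw, hvw, hzM], huw.trans hzu⟩
  suffices M ≤ 0 by linarith [hx₁max x hx]
  rcases hx₀S with hx₀K | hx₀b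
  · obtain ⟨y, hyb, l, hl⟩ := hconn x₀ hx₀K
    have hyM := (hl.propagate hstep hx₀K ⟨hx₀M, rfl⟩).1
    linarith [hb y hyb]
  · linarith [hb x₀ hx₀b]

/-- Comparison principle for the graph infinity Laplacian. -/
theorem stmt0 [Fintype V] (adj : V → V → Prop) (hsymm : ∀ x y, adj x y → adj y x)
    (δ : ℝ) (hδ : 0 < δ) (K : Set V) (hK : K.Nonempty)
    (hconn : ∀ x ∈ K, ∃ y ∈ bdry adj K, ∃ l, pathIn adj K x y l)
    (u v : V → ℝ)
    (hu : ∀ x ∈ K, 0 ≤ lapInf adj u x)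
    (hv : ∀ x ∈ K, lapInf adj v x ≤ 0)
    (hb : ∀ x ∈ bdry adj K, u x ≤ v x) :
    ∀ x ∈ K ∪ bdry adj K, u x ≤ v x :=
  stmt0_general adj K hconn u v hu hv hb
end
end

section
/- Let G be a finite graph with uniform edge length δ, K a connected vertex set with boundary ∂K, d_K the path metric using only paths whose interior vertices lie in K, and x₀ ∈ ∂K. Then u(x) = d_K(x₀, x) satisfies Δ∞u(x) ≤ 0 for all x ∈ K, and v(x) = −d_K(x₀, x) satisfies Δ∞v(x) ≥ 0 for all x ∈ K. -/
open Filter Topology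
open scoped Classical

noncomputable section

variable {V : Type*}

/-!
Let `u = d_K(x₀, ·)` and `x ∈ K`. The last edge `y ~ x` of a shortest path from `x₀` to `x`
gives `u y = u x - δ`, while extending such a path by an edge `x ~ z` gives `u z ≤ u x + δ`
for every neighbour `z`. Hence the maximal increment is at most `δ` and the minimal one at
most `-δ`, so `Δ∞u(x) ≤ 0`. The statement for `-u` follows from `Δ∞(-u) = -Δ∞u`.
-/

variable {adj : V → V → Prop} {K : Set V} {δ : ℝ}

lemma pathIn_iff {x y : V} {l : List V} :
    pathIn adj K x y l ↔ List.IsChain adj (x :: (l ++ [y])) ∧ ∀ z ∈ l, z ∈ K :=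
  Iff.rfl

lemma pathIn_nil_iff {x y : V} : pathIn adj K x y [] ↔ adj x y := by
  simp [pathIn_iff]

lemma pathIn_append_singleton_iff {x y z : V} {l : List V} :
    pathIn adj K x z (l ++ [y]) ↔ pathIn adj K x y l ∧ adj y z ∧ y ∈ K := by
  simp only [pathIn_iff, List.append_assoc, List.singleton_append,
    List.isChain_cons_append_cons_cons, List.IsChain.singleton, and_true, List.mem_append,
    List.mem_singleton, or_imp, forall_and, forall_eq]
  tauto

@[simp]
lemma dK_self (x : V) : dK adj K δ x x = 0 := by
  simp [dK]

lemma nonneg_of_mem_pathLengths (hδ : 0 ≤ δ) {x y : V} {r : ℝ}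
    (hr : r ∈ {r : ℝ | ∃ l : List V, pathIn adj K x y l ∧ r = δ * (l.length + 1)}) : 0 ≤ r := by
  obtain ⟨l, -, rfl⟩ := hr
  positivity

lemma dK_nonneg (hδ : 0 ≤ δ) (x y : V) : 0 ≤ dK adj K δ x y := by
  unfold dK
  split_ifs
  · exact le_rfl
  · exact Real.sInf_nonneg fun r hr => nonneg_of_mem_pathLengths hδ hr

lemma dK_le_of_pathIn (hδ : 0 ≤ δ) {x y : V} {l : List V} (h : pathIn adj K x y l) :
    dK adj K δ x y ≤ δ * (l.length + 1) := by
  unfold dK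
  split_ifs
  · positivity
  · exact csInf_le ⟨0, fun r hr => nonneg_of_mem_pathLengths hδ hr⟩ ⟨l, h, rfl⟩

lemma exists_pathIn_dK_eq (hδ : 0 ≤ δ) {x y : V} (hxy : x ≠ y)
    (hpath : ∃ l, pathIn adj K x y l) :
    ∃ l, pathIn adj K x y l ∧ dK adj K δ x y = δ * (l.length + 1) := by
  have hlen : ∃ n, ∃ l, pathIn adj K x y l ∧ l.length = n :=
    let ⟨l, hl⟩ := hpath; ⟨l.length, l, hl, rfl⟩
  obtain ⟨l, hl, hl_len⟩ := Nat.find_spec hlen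
  refine ⟨l, hl, ?_⟩
  rw [dK, if_neg hxy]
  refine IsLeast.csInf_eq ⟨⟨l, hl, rfl⟩, ?_⟩
  rintro r ⟨l', hl', rfl⟩
  have hshorter : (l.length : ℝ) ≤ l'.length := by
    exact_mod_cast hl_len ▸ Nat.find_min' hlen ⟨l', hl', rfl⟩
  gcongr

lemma exists_adj_dK_le_sub (hδ : 0 ≤ δ) {x₀ x : V} (hne : x₀ ≠ x)
    (hpath : ∃ l, pathIn adj K x₀ x l) :
    ∃ y, adj y x ∧ dK adj K δ x₀ y ≤ dK adj K δ x₀ x - δ := by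
  obtain ⟨l, hl, hdist⟩ := exists_pathIn_dK_eq hδ hne hpath
  rcases List.eq_nil_or_concat l with rfl | ⟨l', y, rfl⟩
  · refine ⟨x₀, pathIn_nil_iff.1 hl, ?_⟩
    simp [hdist]
  · rw [List.concat_eq_append] at hl hdist
    obtain ⟨hl', hyx, -⟩ := pathIn_append_singleton_iff.1 hl
    refine ⟨y, hyx, ?_⟩
    have hy := dK_le_of_pathIn hδ hl'
    simp only [hdist, List.length_append, List.length_singleton, Nat.cast_add, Nat.cast_one]
    linarith

lemma dK_le_add_of_adj (hδ : 0 ≤ δ) {x₀ x z : V} (hne : x₀ ≠ x)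
    (hpath : ∃ l, pathIn adj K x₀ x l) (hx : x ∈ K) (hxz : adj x z) :
    dK adj K δ x₀ z ≤ dK adj K δ x₀ x + δ := by
  obtain ⟨l, hl, hdist⟩ := exists_pathIn_dK_eq hδ hne hpath
  have hz := dK_le_of_pathIn hδ (pathIn_append_singleton_iff.2 ⟨hl, hxz, hx⟩)
  simp only [List.length_append, List.length_singleton, Nat.cast_add, Nat.cast_one] at hz
  linarith

lemma lapInf_nonpos {u : V → ℝ} {x : V} {c m : ℝ}
    (hdown : ∃ y, adj x y ∧ u y ≤ u x - c) (hup : ∀ z, adj x z → u z ≤ u x + c)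
    (hlow : ∀ z, adj x z → m ≤ u z) : lapInf adj u x ≤ 0 := by
  obtain ⟨y, hxy, hy⟩ := hdown
  have hmem : u y - u x ∈ (fun z => u z - u x) '' {z | adj x z} := ⟨y, hxy, rfl⟩
  have hsup : sSup ((fun z => u z - u x) '' {z | adj x z}) ≤ c := by
    refine csSup_le ⟨_, hmem⟩ ?_
    rintro r ⟨z, hz, rfl⟩
    linarith [hup z hz]
  have hinf : sInf ((fun z => u z - u x) '' {z | adj x z}) ≤ -c := by
    have hbdd : BddBelow ((fun z => u z - u x) '' {z | adj x z}) := by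
      refine ⟨m - u x, ?_⟩
      rintro r ⟨z, hz, rfl⟩
      linarith [hlow z hz]
    linarith [csInf_le hbdd hmem]
  unfold lapInf
  linarith

lemma lapInf_neg (u : V → ℝ) (x : V) :
    lapInf adj (fun y => -u y) x = -lapInf adj u x := by
  have himage : (fun y => -u y - -u x) '' {y | adj x y} = -((fun y => u y - u x) '' {y | adj x y}) := by
    rw [← Set.image_neg_eq_neg, Set.image_image]
    congr 1
    ext y
    ring
  rw [lapInf, lapInf, himage, Real.sSup_neg, Real.sInf_neg]
  ring

theorem stmt3_general (adj : V → V → Prop) (hsymm : ∀ x y, adj x y → adj y x)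
    (δ : ℝ) (hδ : 0 < δ) (K : Set V) (hconn : connectedIn adj K)
    (x₀ : V) (hx₀ : x₀ ∈ bdry adj K) :
    (∀ x ∈ K, lapInf adj (fun y => dK adj K δ x₀ y) x ≤ 0) ∧
    (∀ x ∈ K, 0 ≤ lapInf adj (fun y => -dK adj K δ x₀ y) x) := by
  have hsuper : ∀ x ∈ K, lapInf adj (fun y => dK adj K δ x₀ y) x ≤ 0 := by
    intro x hx
    have hne : x₀ ≠ x := fun h => hx₀.1 (h ▸ hx)
    have hpath := hconn x₀ (Or.inr hx₀) x (Or.inl hx) hne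
    obtain ⟨y, hyx, hy⟩ := exists_adj_dK_le_sub hδ.le hne hpath
    exact lapInf_nonpos ⟨y, hsymm y x hyx, hy⟩
      (fun z hz => dK_le_add_of_adj hδ.le hne hpath hx hz)
      (fun z _ => dK_nonneg hδ.le x₀ z)
  refine ⟨hsuper, fun x hx => ?_⟩
  rw [lapInf_neg (fun y => dK adj K δ x₀ y)]
  linarith [hsuper x hx]

/-- `d_K(x₀,·)` is a supersolution and `-d_K(x₀,·)` a subsolution of the infinity Laplacian. -/
theorem stmt3 [Fintype V] (adj : V → V → Prop) (hsymm : ∀ x y, adj x y → adj y x)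
    (δ : ℝ) (hδ : 0 < δ) (K : Set V) (hconn : connectedIn adj K)
    (x₀ : V) (hx₀ : x₀ ∈ bdry adj K) :
    (∀ x ∈ K, lapInf adj (fun y => dK adj K δ x₀ y) x ≤ 0) ∧
    (∀ x ∈ K, 0 ≤ lapInf adj (fun y => -dK adj K δ x₀ y) x) :=
  stmt3_general adj hsymm δ hδ K hconn x₀ hx₀
end
end

section
/- On the first-level Sierpinski pre-fractal V¹ with boundary values v(q₁)=0, v(q₂)=e, v(q₃)=1 where e ∈ [1/3, 1/2], the unique infinity harmonic function satisfies v(q₁₃) = 1/2, v(q₁₂) = 1/3, v(q₂₃) = 2/3, where q_{ij} denotes the midpoint of the segment qᵢqⱼ. -/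
open Filter Topology
open scoped Classical

noncomputable section

variable {V : Type*}

/-- Vertices of the initial unit equilateral triangle. -/
def q : Fin 3 → ℝ × ℝ := ![(0, 0), (1, 0), (1/2, Real.sqrt 3 / 2)]

/-- The contraction maps generating the Sierpinski gasket. -/
def psi (i : Fin 3) (x : ℝ × ℝ) : ℝ × ℝ := q i + (2 : ℝ)⁻¹ • (x - q i)

/-- `ψ_w = ψ_{w₁} ∘ ⋯ ∘ ψ_{wₙ}` for a word `w`. -/
def psiW (w : List (Fin 3)) : ℝ × ℝ → ℝ × ℝ := w.foldr (fun i f => psi i ∘ f) id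

def V0 : Set (ℝ × ℝ) := {q 0, q 1, q 2}

/-- The `n`-th pre-fractal vertex set `Vⁿ`. -/
def Vn (n : ℕ) : Set (ℝ × ℝ) := ⋃ w ∈ {w : List (Fin 3) | w.length = n}, psiW w '' V0

/-- Adjacency on `Vⁿ`: `x ~ₙ y` iff `x ≠ y` and the segment `xy` is the image of a side
of the initial triangle under some `ψ_w` with `|w| = n`. -/
def adjN (n : ℕ) (x y : ℝ × ℝ) : Prop :=
  x ≠ y ∧ ∃ w : List (Fin 3), w.length = n ∧ x ∈ psiW w '' V0 ∧ y ∈ psiW w '' V0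

/-- Edge length `δₙ = 2⁻ⁿ`. -/
def deltaN (n : ℕ) : ℝ := (2 : ℝ)⁻¹ ^ n

set_option linter.unreachableTactic false
set_option linter.unusedTactic false
set_option linter.unnecessarySeqFocus false

def A : ℝ × ℝ := (1/2, 0)
def B : ℝ × ℝ := (1/4, Real.sqrt 3 / 4)
def C : ℝ × ℝ := (3/4, Real.sqrt 3 / 4)

lemma neAq0 : A ≠ q 0 := by simp [A, q, Prod.ext_iff] <;> norm_num
lemma neAq1 : A ≠ q 1 := by simp [A, q, Prod.ext_iff] <;> norm_num
lemma neAq2 : A ≠ q 2 := by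
  have hs : (0:ℝ) < Real.sqrt 3 := Real.sqrt_pos.mpr (by norm_num)
  simp [A, q, Prod.ext_iff]; intro _; nlinarith
lemma neAB : A ≠ B := by simp [A, B, Prod.ext_iff] <;> norm_num
lemma neAC : A ≠ C := by simp [A, C, Prod.ext_iff] <;> norm_num
lemma neBq0 : B ≠ q 0 := by simp [B, q, Prod.ext_iff] <;> norm_num
lemma neBq1 : B ≠ q 1 := by simp [B, q, Prod.ext_iff] <;> norm_num
lemma neBq2 : B ≠ q 2 := by simp [B, q, Prod.ext_iff] <;> norm_num
lemma neBC : B ≠ C := by simp [B, C, Prod.ext_iff] <;> norm_num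
lemma neCq0 : C ≠ q 0 := by simp [C, q, Prod.ext_iff] <;> norm_num
lemma neCq1 : C ≠ q 1 := by simp [C, q, Prod.ext_iff] <;> norm_num
lemma neCq2 : C ≠ q 2 := by simp [C, q, Prod.ext_iff] <;> norm_num

lemma p00 : psi 0 (q 0) = q 0 := by simp [psi, q, Prod.ext_iff] <;> norm_num
lemma p01 : psi 0 (q 1) = A := by simp [psi, q, A, Prod.ext_iff] <;> norm_num
lemma p02 : psi 0 (q 2) = B := by simp [psi, q, B, Prod.ext_iff] <;> norm_num <;> ring
lemma p10 : psi 1 (q 0) = A := by simp [psi, q, A, Prod.ext_iff] <;> norm_num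
lemma p11 : psi 1 (q 1) = q 1 := by simp [psi, q, Prod.ext_iff] <;> norm_num
lemma p12 : psi 1 (q 2) = C := by simp [psi, q, C, Prod.ext_iff] <;> norm_num <;> ring
lemma p20 : psi 2 (q 0) = B := by simp [psi, q, B, Prod.ext_iff] <;> norm_num <;> ring
lemma p21 : psi 2 (q 1) = C := by simp [psi, q, C, Prod.ext_iff] <;> norm_num <;> ring
lemma p22 : psi 2 (q 2) = q 2 := by simp [psi, q, Prod.ext_iff] <;> norm_num

lemma cell (i : Fin 3) : psiW [i] '' V0 = {psi i (q 0), psi i (q 1), psi i (q 2)} := by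
  have h : psiW [i] = psi i := rfl
  rw [h, V0, Set.image_insert_eq, Set.image_insert_eq, Set.image_singleton]

lemma cell0 : psiW [(0 : Fin 3)] '' V0 = {q 0, A, B} := by rw [cell, p00, p01, p02]
lemma cell1 : psiW [(1 : Fin 3)] '' V0 = {A, q 1, C} := by rw [cell, p10, p11, p12]
lemma cell2 : psiW [(2 : Fin 3)] '' V0 = {B, C, q 2} := by rw [cell, p20, p21, p22]

lemma nbrB : {y | adjN 1 B y} = ({q 0, A, C, q 2} : Set (ℝ × ℝ)) := by
  ext y
  constructor
  · rintro ⟨hne, w, hw, hx, hy⟩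
    obtain ⟨i, rfl⟩ := List.length_eq_one_iff.mp hw
    fin_cases i
    · replace hy : y ∈ ({q 0, A, B} : Set (ℝ × ℝ)) := by rw [← cell0]; exact hy
      rcases hy with rfl | rfl | rfl
      · left; rfl
      · right; left; rfl
      · exact absurd rfl hne
    · replace hx : B ∈ ({A, q 1, C} : Set (ℝ × ℝ)) := by rw [← cell1]; exact hx
      rcases hx with h | h | h
      · exact absurd h neAB.symm
      · exact absurd h neBq1
      · exact absurd h neBC
    · replace hy : y ∈ ({B, C, q 2} : Set (ℝ × ℝ)) := by rw [← cell2]; exact hy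
      rcases hy with rfl | rfl | rfl
      · exact absurd rfl hne
      · right; right; left; rfl
      · right; right; right; rfl
  · intro hy
    rcases hy with rfl | rfl | rfl | rfl
    · exact ⟨neBq0, [0], rfl, by rw [cell0]; simp, by rw [cell0]; simp⟩
    · exact ⟨neAB.symm, [0], rfl, by rw [cell0]; simp, by rw [cell0]; simp⟩
    · exact ⟨neBC, [2], rfl, by rw [cell2]; simp, by rw [cell2]; simp⟩
    · exact ⟨neBq2, [2], rfl, by rw [cell2]; simp, by rw [cell2]; simp⟩

lemma nbrA : {y | adjN 1 A y} = ({q 0, q 1, B, C} : Set (ℝ × ℝ)) := by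
  ext y
  constructor
  · rintro ⟨hne, w, hw, hx, hy⟩
    obtain ⟨i, rfl⟩ := List.length_eq_one_iff.mp hw
    fin_cases i
    · replace hy : y ∈ ({q 0, A, B} : Set (ℝ × ℝ)) := by rw [← cell0]; exact hy
      rcases hy with rfl | rfl | rfl
      · left; rfl
      · exact absurd rfl hne
      · right; right; left; rfl
    · replace hy : y ∈ ({A, q 1, C} : Set (ℝ × ℝ)) := by rw [← cell1]; exact hy
      rcases hy with rfl | rfl | rfl
      · exact absurd rfl hne
      · right; left; rfl
      · right; right; right; rfl
    · replace hx : A ∈ ({B, C, q 2} : Set (ℝ × ℝ)) := by rw [← cell2]; exact hx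
      rcases hx with h | h | h
      · exact absurd h neAB
      · exact absurd h neAC
      · exact absurd h neAq2
  · intro hy
    rcases hy with rfl | rfl | rfl | rfl
    · exact ⟨neAq0, [0], rfl, by rw [cell0]; simp, by rw [cell0]; simp⟩
    · exact ⟨neAq1, [1], rfl, by rw [cell1]; simp, by rw [cell1]; simp⟩
    · exact ⟨neAB, [0], rfl, by rw [cell0]; simp, by rw [cell0]; simp⟩
    · exact ⟨neAC, [1], rfl, by rw [cell1]; simp, by rw [cell1]; simp⟩

lemma nbrC : {y | adjN 1 C y} = ({q 1, q 2, A, B} : Set (ℝ × ℝ)) := by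
  ext y
  constructor
  · rintro ⟨hne, w, hw, hx, hy⟩
    obtain ⟨i, rfl⟩ := List.length_eq_one_iff.mp hw
    fin_cases i
    · replace hx : C ∈ ({q 0, A, B} : Set (ℝ × ℝ)) := by rw [← cell0]; exact hx
      rcases hx with h | h | h
      · exact absurd h neCq0
      · exact absurd h neAC.symm
      · exact absurd h neBC.symm
    · replace hy : y ∈ ({A, q 1, C} : Set (ℝ × ℝ)) := by rw [← cell1]; exact hy
      rcases hy with rfl | rfl | rfl
      · right; right; left; rfl
      · left; rfl
      · exact absurd rfl hne
    · replace hy : y ∈ ({B, C, q 2} : Set (ℝ × ℝ)) := by rw [← cell2]; exact hy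
      rcases hy with rfl | rfl | rfl
      · right; right; right; rfl
      · exact absurd rfl hne
      · right; left; rfl
  · intro hy
    rcases hy with rfl | rfl | rfl | rfl
    · exact ⟨neCq1, [1], rfl, by rw [cell1]; simp, by rw [cell1]; simp⟩
    · exact ⟨neCq2, [2], rfl, by rw [cell2]; simp, by rw [cell2]; simp⟩
    · exact ⟨neAC.symm, [1], rfl, by rw [cell1]; simp, by rw [cell1]; simp⟩
    · exact ⟨neBC.symm, [2], rfl, by rw [cell2]; simp, by rw [cell2]; simp⟩

lemma sSup4 (a b c d : ℝ) : sSup ({a, b, c, d} : Set ℝ) = max a (max b (max c d)) := by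
  have h1 : BddAbove ({c, d} : Set ℝ) := ((Set.finite_singleton d).insert c).bddAbove
  have h2 : BddAbove ({b, c, d} : Set ℝ) := (((Set.finite_singleton d).insert c).insert b).bddAbove
  rw [csSup_insert h2 ⟨b, by simp⟩, csSup_insert h1 ⟨c, by simp⟩, csSup_pair]
lemma sInf4 (a b c d : ℝ) : sInf ({a, b, c, d} : Set ℝ) = min a (min b (min c d)) := by
  have h1 : BddBelow ({c, d} : Set ℝ) := ((Set.finite_singleton d).insert c).bddBelow
  have h2 : BddBelow ({b, c, d} : Set ℝ) := (((Set.finite_singleton d).insert c).insert b).bddBelow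
  rw [csInf_insert h2 ⟨b, by simp⟩, csInf_insert h1 ⟨c, by simp⟩, csInf_pair]

lemma solve (e a b c : ℝ) (he1 : 1/3 ≤ e) (he2 : e ≤ 1/2)
    (hB : max (0-b) (max (a-b) (max (c-b) (1-b))) + min (0-b) (min (a-b) (min (c-b) (1-b))) = 0)
    (hA : max (0-a) (max (e-a) (max (b-a) (c-a))) + min (0-a) (min (e-a) (min (b-a) (c-a))) = 0)
    (hC : max (e-c) (max (1-c) (max (a-c) (b-c))) + min (e-c) (min (1-c) (min (a-c) (b-c))) = 0) :
    b = 1/2 ∧ a = 1/3 ∧ c = 2/3 := by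
  -- maximum principle: the largest of a, b, c is ≤ 1
  have hM : ∀ x, (x = a ∨ x = b ∨ x = c) → a ≤ x → b ≤ x → c ≤ x → x ≤ 1 := by
    intro x hx hax hbx hcx
    by_contra hgt
    push_neg at hgt
    rcases hx with rfl | rfl | rfl
    · have h1 : max (0-x) (max (e-x) (max (b-x) (c-x))) ≤ 0 := by
        simp only [max_le_iff]; exact ⟨by linarith, by linarith, by linarith, by linarith⟩
      have h2 : min (0-x) (min (e-x) (min (b-x) (c-x))) ≤ 0 - x := min_le_left _ _
      linarith
    · have h1 : max (0-x) (max (a-x) (max (c-x) (1-x))) ≤ 0 := by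
        simp only [max_le_iff]; exact ⟨by linarith, by linarith, by linarith, by linarith⟩
      have h2 : min (0-x) (min (a-x) (min (c-x) (1-x))) ≤ 0 - x := min_le_left _ _
      linarith
    · have h1 : max (e-x) (max (1-x) (max (a-x) (b-x))) ≤ 0 := by
        simp only [max_le_iff]; exact ⟨by linarith, by linarith, by linarith, by linarith⟩
      have h2 : min (e-x) (min (1-x) (min (a-x) (b-x))) ≤ 1 - x :=
        le_trans (min_le_right _ _) (min_le_left _ _)
      linarith
  -- minimum principle: the smallest of a, b, c is ≥ 0
  have hm : ∀ x, (x = a ∨ x = b ∨ x = c) → x ≤ a → x ≤ b → x ≤ c → 0 ≤ x := by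
    intro x hx hax hbx hcx
    by_contra hlt
    push_neg at hlt
    rcases hx with rfl | rfl | rfl
    · have h1 : e - x ≤ max (0-x) (max (e-x) (max (b-x) (c-x))) :=
        le_max_of_le_right (le_max_left _ _)
      have h2 : 0 ≤ min (0-x) (min (e-x) (min (b-x) (c-x))) := by
        simp only [le_min_iff]; exact ⟨by linarith, by linarith, by linarith, by linarith⟩
      linarith
    · have h1 : 1 - x ≤ max (0-x) (max (a-x) (max (c-x) (1-x))) :=
        le_max_of_le_right (le_max_of_le_right (le_max_right _ _))
      have h2 : 0 ≤ min (0-x) (min (a-x) (min (c-x) (1-x))) := by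
        simp only [le_min_iff]; exact ⟨by linarith, by linarith, by linarith, by linarith⟩
      linarith
    · have h1 : 1 - x ≤ max (e-x) (max (1-x) (max (a-x) (b-x))) :=
        le_max_of_le_right (le_max_left _ _)
      have h2 : 0 ≤ min (e-x) (min (1-x) (min (a-x) (b-x))) := by
        simp only [le_min_iff]; exact ⟨by linarith, by linarith, by linarith, by linarith⟩
      linarith
  have haM : a ≤ max a (max b c) := le_max_left _ _
  have hbM : b ≤ max a (max b c) := le_trans (le_max_left _ _) (le_max_right _ _)
  have hcM : c ≤ max a (max b c) := le_trans (le_max_right _ _) (le_max_right _ _)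
  have hMeq : max a (max b c) = a ∨ max a (max b c) = b ∨ max a (max b c) = c := by
    rcases max_choice a (max b c) with h | h
    · exact Or.inl h
    · rcases max_choice b c with h' | h'
      · exact Or.inr (Or.inl (h.trans h'))
      · exact Or.inr (Or.inr (h.trans h'))
  have hMle : max a (max b c) ≤ 1 := hM _ hMeq haM hbM hcM
  have ham : min a (min b c) ≤ a := min_le_left _ _
  have hbm : min a (min b c) ≤ b := le_trans (min_le_right _ _) (min_le_left _ _)
  have hcm : min a (min b c) ≤ c := le_trans (min_le_right _ _) (min_le_right _ _)
  have hmeq : min a (min b c) = a ∨ min a (min b c) = b ∨ min a (min b c) = c := by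
    rcases min_choice a (min b c) with h | h
    · exact Or.inl h
    · rcases min_choice b c with h' | h'
      · exact Or.inr (Or.inl (h.trans h'))
      · exact Or.inr (Or.inr (h.trans h'))
  have hmle : (0:ℝ) ≤ min a (min b c) := hm _ hmeq ham hbm hcm
  have ha1 : a ≤ 1 := le_trans haM hMle
  have hb1 : b ≤ 1 := le_trans hbM hMle
  have hc1 : c ≤ 1 := le_trans hcM hMle
  have ha0 : 0 ≤ a := le_trans hmle ham
  have hb0 : 0 ≤ b := le_trans hmle hbm
  have hc0 : 0 ≤ c := le_trans hmle hcm
  -- b = 1/2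
  have hmaxB : max (0-b) (max (a-b) (max (c-b) (1-b))) = 1 - b := by
    apply le_antisymm
    · simp only [max_le_iff]; exact ⟨by linarith, by linarith, by linarith, le_refl _⟩
    · exact le_max_of_le_right (le_max_of_le_right (le_max_right _ _))
  have hminB : min (0-b) (min (a-b) (min (c-b) (1-b))) = 0 - b := by
    apply le_antisymm (min_le_left _ _)
    simp only [le_min_iff]; exact ⟨le_refl _, by linarith, by linarith, by linarith⟩
  have hb : b = 1/2 := by rw [hmaxB, hminB] at hB; linarith
  -- equations for a and c
  have hminA : min (0-a) (min (e-a) (min (b-a) (c-a))) = 0 - a := by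
    apply le_antisymm (min_le_left _ _)
    simp only [le_min_iff]; exact ⟨le_refl _, by linarith, by linarith, by linarith⟩
  have hA' : max (0-a) (max (e-a) (max (b-a) (c-a))) = a := by rw [hminA] at hA; linarith
  have hmaxC : max (e-c) (max (1-c) (max (a-c) (b-c))) = 1 - c := by
    apply le_antisymm
    · simp only [max_le_iff]; exact ⟨by linarith, le_refl _, by linarith, by linarith⟩
    · exact le_max_of_le_right (le_max_left _ _)
  have hC' : min (e-c) (min (1-c) (min (a-c) (b-c))) = c - 1 := by rw [hmaxC] at hC; linarith
  rcases le_total c (1/2) with hc2 | hc2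
  · -- c ≤ 1/2 : contradiction
    exfalso
    have hA2 : max (0-a) (max (e-a) (max (b-a) (c-a))) = b - a := by
      apply le_antisymm
      · simp only [max_le_iff]; exact ⟨by linarith, by linarith, le_refl _, by linarith⟩
      · exact le_max_of_le_right (le_max_of_le_right (le_max_left _ _))
    have ha : a = 1/4 := by rw [hA2] at hA'; linarith
    have hC2 : min (e-c) (min (1-c) (min (a-c) (b-c))) = a - c := by
      apply le_antisymm
      · exact le_trans (min_le_right _ _) (le_trans (min_le_right _ _) (min_le_left _ _))
      · simp only [le_min_iff]; exact ⟨by linarith, by linarith, le_refl _, by linarith⟩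
    rw [hC2] at hC'; linarith
  · -- c ≥ 1/2
    have hA2 : max (0-a) (max (e-a) (max (b-a) (c-a))) = c - a := by
      apply le_antisymm
      · simp only [max_le_iff]; exact ⟨by linarith, by linarith, by linarith, le_refl _⟩
      · exact le_max_of_le_right (le_max_of_le_right (le_max_right _ _))
    have hac : c = 2 * a := by rw [hA2] at hA'; linarith
    rcases le_total e a with hea | hea
    · have hC2 : min (e-c) (min (1-c) (min (a-c) (b-c))) = e - c := by
        apply le_antisymm (min_le_left _ _)
        simp only [le_min_iff]; exact ⟨le_refl _, by linarith, by linarith, by linarith⟩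
      rw [hC2] at hC'
      exact ⟨hb, by linarith, by linarith⟩
    · have hC2 : min (e-c) (min (1-c) (min (a-c) (b-c))) = a - c := by
        apply le_antisymm
          (le_trans (min_le_right _ _) (le_trans (min_le_right _ _) (min_le_left _ _)))
        simp only [le_min_iff]; exact ⟨by linarith, by linarith, le_refl _, by linarith⟩
      rw [hC2] at hC'
      exact ⟨hb, by linarith, by linarith⟩


lemma memVn1 {x : ℝ × ℝ} (i : Fin 3) (hx : x ∈ psiW [i] '' V0) : x ∈ Vn 1 :=
  Set.mem_biUnion (show [i] ∈ {w : List (Fin 3) | w.length = 1} from rfl) hx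

/-- Values of the infinity harmonic function on `V¹` for boundary data `0, e, 1`
with `e ∈ [1/3, 1/2]`. -/
theorem stmt14 (e : ℝ) (he : e ∈ Set.Icc (1/3 : ℝ) (1/2))
    (v : ℝ × ℝ → ℝ) (h1 : v (q 0) = 0) (h2 : v (q 1) = e) (h3 : v (q 2) = 1)
    (hharm : ∀ x ∈ Vn 1 \ V0, lapInf (adjN 1) v x = 0) :
    v ((2:ℝ)⁻¹ • (q 0 + q 2)) = 1/2 ∧
    v ((2:ℝ)⁻¹ • (q 0 + q 1)) = 1/3 ∧
    v ((2:ℝ)⁻¹ • (q 1 + q 2)) = 2/3 := by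
  obtain ⟨he1, he2⟩ := he
  have hmB : (2:ℝ)⁻¹ • (q 0 + q 2) = B := by simp [q, B, Prod.ext_iff] <;> norm_num <;> ring
  have hmA : (2:ℝ)⁻¹ • (q 0 + q 1) = A := by simp [q, A, Prod.ext_iff] <;> norm_num
  have hmC : (2:ℝ)⁻¹ • (q 1 + q 2) = C := by simp [q, C, Prod.ext_iff] <;> norm_num <;> ring
  have hVA : A ∈ Vn 1 \ V0 := by
    refine ⟨memVn1 0 (by rw [cell0]; simp), ?_⟩
    intro h
    simp only [V0, Set.mem_insert_iff, Set.mem_singleton_iff] at h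
    rcases h with h | h | h
    exacts [neAq0 h, neAq1 h, neAq2 h]
  have hVB : B ∈ Vn 1 \ V0 := by
    refine ⟨memVn1 0 (by rw [cell0]; simp), ?_⟩
    intro h
    simp only [V0, Set.mem_insert_iff, Set.mem_singleton_iff] at h
    rcases h with h | h | h
    exacts [neBq0 h, neBq1 h, neBq2 h]
  have hVC : C ∈ Vn 1 \ V0 := by
    refine ⟨memVn1 1 (by rw [cell1]; simp), ?_⟩
    intro h
    simp only [V0, Set.mem_insert_iff, Set.mem_singleton_iff] at h
    rcases h with h | h | h
    exacts [neCq0 h, neCq1 h, neCq2 h]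
  have eqB := hharm B hVB
  have eqA := hharm A hVA
  have eqC := hharm C hVC
  unfold lapInf at eqB eqA eqC
  rw [nbrB, Set.image_insert_eq, Set.image_insert_eq, Set.image_insert_eq,
    Set.image_singleton, sSup4, sInf4, h1, h3] at eqB
  rw [nbrA, Set.image_insert_eq, Set.image_insert_eq, Set.image_insert_eq,
    Set.image_singleton, sSup4, sInf4, h1, h2] at eqA
  rw [nbrC, Set.image_insert_eq, Set.image_insert_eq, Set.image_insert_eq,
    Set.image_singleton, sSup4, sInf4, h2, h3] at eqC
  obtain ⟨hb, ha, hc⟩ := solve e (v A) (v B) (v C) he1 he2 eqB eqA eqC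
  rw [hmA, hmB, hmC]
  exact ⟨hb, ha, hc⟩
end
end

section
/- On the first-level Sierpinski pre-fractal V¹ with boundary values v(q₁)=0, v(q₂)=e, v(q₃)=1 where e ∈ [0, 1/3], the unique infinity harmonic function satisfies v(q₁₃) = 1/2, v(q₂₃) = (1+e)/2, v(q₁₂) = (1+e)/4. -/
open Filter Topology
open scoped Classical

noncomputable section

variable {V : Type*}

namespace SG
noncomputable def s : ℝ := Real.sqrt 3
lemma hs : 0 < s := Real.sqrt_pos.mpr (by norm_num)

noncomputable def P0 : ℝ × ℝ := (0, 0)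
noncomputable def P1 : ℝ × ℝ := (1, 0)
noncomputable def P2 : ℝ × ℝ := (1/2, s/2)
noncomputable def M01 : ℝ × ℝ := (1/2, 0)
noncomputable def M02 : ℝ × ℝ := (1/4, s/4)
noncomputable def M12 : ℝ × ℝ := (3/4, s/4)

lemma hq0 : q 0 = P0 := rfl
lemma hq1 : q 1 = P1 := rfl
lemma hq2 : q 2 = P2 := rfl

lemma hpsiW (i : Fin 3) : psiW [i] = psi i := rfl

lemma c00 : psi 0 (q 0) = P0 := by simp [psi, q, Prod.ext_iff, P0]
lemma c01 : psi 0 (q 1) = M01 := by simp [psi, q, Prod.ext_iff, M01]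
lemma c02 : psi 0 (q 2) = M02 := by simp [psi, q, Prod.ext_iff, s, M02]; constructor <;> ring
lemma c10 : psi 1 (q 0) = M01 := by simp [psi, q, Prod.ext_iff, M01]; ring
lemma c11 : psi 1 (q 1) = P1 := by simp [psi, q, Prod.ext_iff, P1]
lemma c12 : psi 1 (q 2) = M12 := by simp [psi, q, Prod.ext_iff, s, M12]; constructor <;> ring
lemma c20 : psi 2 (q 0) = M02 := by simp [psi, q, Prod.ext_iff, s, M02]; constructor <;> ring
lemma c21 : psi 2 (q 1) = M12 := by simp [psi, q, Prod.ext_iff, s, M12]; constructor <;> ring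
lemma c22 : psi 2 (q 2) = P2 := by simp [psi, q, Prod.ext_iff, s, P2]

lemma himg0 : psiW [0] '' V0 = {P0, M01, M02} := by
  rw [hpsiW, V0, Set.image_insert_eq, Set.image_insert_eq, Set.image_singleton, c00, c01, c02]
lemma himg1 : psiW [1] '' V0 = {M01, P1, M12} := by
  rw [hpsiW, V0, Set.image_insert_eq, Set.image_insert_eq, Set.image_singleton, c10, c11, c12]
lemma himg2 : psiW [2] '' V0 = {M02, M12, P2} := by
  rw [hpsiW, V0, Set.image_insert_eq, Set.image_insert_eq, Set.image_singleton, c20, c21, c22]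

-- distinctness
lemma dP0M01 : P0 ≠ M01 := by intro h; rw [Prod.ext_iff] at h; norm_num [P0, M01] at h
lemma dP0M02 : P0 ≠ M02 := by intro h; rw [Prod.ext_iff] at h; norm_num [P0, M02] at h
lemma dP0M12 : P0 ≠ M12 := by intro h; rw [Prod.ext_iff] at h; norm_num [P0, M12] at h
lemma dP0P1 : P0 ≠ P1 := by intro h; rw [Prod.ext_iff] at h; norm_num [P0, P1] at h
lemma dP0P2 : P0 ≠ P2 := by intro h; rw [Prod.ext_iff] at h; norm_num [P0, P2] at h
lemma dP1M01 : P1 ≠ M01 := by intro h; rw [Prod.ext_iff] at h; norm_num [P1, M01] at h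
lemma dP1M02 : P1 ≠ M02 := by intro h; rw [Prod.ext_iff] at h; norm_num [P1, M02] at h
lemma dP1M12 : P1 ≠ M12 := by intro h; rw [Prod.ext_iff] at h; norm_num [P1, M12] at h
lemma dP1P2 : P1 ≠ P2 := by intro h; rw [Prod.ext_iff] at h; norm_num [P1, P2] at h
lemma dP2M02 : P2 ≠ M02 := by intro h; rw [Prod.ext_iff] at h; norm_num [P2, M02] at h
lemma dP2M12 : P2 ≠ M12 := by intro h; rw [Prod.ext_iff] at h; norm_num [P2, M12] at h
lemma dP2M01 : P2 ≠ M01 := by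
  intro h
  have h2 := congrArg Prod.snd h
  simp only [P2, M01] at h2
  have := hs
  norm_num at h2
  linarith
lemma dM01M02 : M01 ≠ M02 := by intro h; rw [Prod.ext_iff] at h; norm_num [M01, M02] at h
lemma dM01M12 : M01 ≠ M12 := by intro h; rw [Prod.ext_iff] at h; norm_num [M01, M12] at h
lemma dM02M12 : M02 ≠ M12 := by intro h; rw [Prod.ext_iff] at h; norm_num [M02, M12] at h

lemma word1 (w : List (Fin 3)) (hw : w.length = 1) :
    psiW w '' V0 = {P0, M01, M02} ∨ psiW w '' V0 = {M01, P1, M12} ∨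
    psiW w '' V0 = {M02, M12, P2} := by
  obtain ⟨i, rfl⟩ := List.length_eq_one_iff.mp hw
  fin_cases i
  · exact Or.inl himg0
  · exact Or.inr (Or.inl himg1)
  · exact Or.inr (Or.inr himg2)

lemma nbhd02 : {y | adjN 1 M02 y} = {P0, P2, M01, M12} := by
  ext y; constructor
  · rintro ⟨hne, w, hw, hx, hy⟩
    rcases word1 w hw with h | h | h <;> rw [h] at hx hy
    · rcases hy with rfl | rfl | rfl
      · exact Or.inl rfl
      · exact Or.inr (Or.inr (Or.inl rfl))
      · exact absurd rfl hne.symm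
    · rcases hx with h' | h' | h'
      · exact absurd h'.symm dM01M02
      · exact absurd h'.symm dP1M02
      · exact absurd h'.symm dM02M12.symm
    · rcases hy with rfl | rfl | rfl
      · exact absurd rfl hne.symm
      · exact Or.inr (Or.inr (Or.inr rfl))
      · exact Or.inr (Or.inl rfl)
  · have m0 : M02 ∈ psiW [0] '' V0 := by rw [himg0]; simp
    have m2 : M02 ∈ psiW [2] '' V0 := by rw [himg2]; simp
    rintro (rfl | rfl | rfl | rfl)
    · exact ⟨dP0M02.symm, [0], rfl, m0, by rw [himg0]; simp⟩
    · exact ⟨dP2M02.symm, [2], rfl, m2, by rw [himg2]; simp⟩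
    · exact ⟨dM01M02.symm, [0], rfl, m0, by rw [himg0]; simp⟩
    · exact ⟨dM02M12, [2], rfl, m2, by rw [himg2]; simp⟩

lemma max4_choice (x1 x2 x3 x4 : ℝ) :
    max x1 (max x2 (max x3 x4)) = x1 ∨ max x1 (max x2 (max x3 x4)) = x2 ∨
    max x1 (max x2 (max x3 x4)) = x3 ∨ max x1 (max x2 (max x3 x4)) = x4 := by
  rcases max_choice x1 (max x2 (max x3 x4)) with h | h
  · exact Or.inl h
  · rw [h]
    rcases max_choice x2 (max x3 x4) with h2 | h2
    · exact Or.inr (Or.inl h2)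
    · rw [h2]
      rcases max_choice x3 x4 with h3 | h3
      · exact Or.inr (Or.inr (Or.inl h3))
      · exact Or.inr (Or.inr (Or.inr h3))

lemma min4_choice (x1 x2 x3 x4 : ℝ) :
    min x1 (min x2 (min x3 x4)) = x1 ∨ min x1 (min x2 (min x3 x4)) = x2 ∨
    min x1 (min x2 (min x3 x4)) = x3 ∨ min x1 (min x2 (min x3 x4)) = x4 := by
  rcases min_choice x1 (min x2 (min x3 x4)) with h | h
  · exact Or.inl h
  · rw [h]
    rcases min_choice x2 (min x3 x4) with h2 | h2
    · exact Or.inr (Or.inl h2)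
    · rw [h2]
      rcases min_choice x3 x4 with h3 | h3
      · exact Or.inr (Or.inr (Or.inl h3))
      · exact Or.inr (Or.inr (Or.inr h3))

set_option maxHeartbeats 2000000 in
lemma arith (e a b c : ℝ) (he0 : 0 ≤ e) (he1 : e ≤ 1/3)
    (EA : max (0-a) (max (1-a) (max (c-a) (b-a))) +
          min (0-a) (min (1-a) (min (c-a) (b-a))) = 0)
    (EB : max (e-b) (max (1-b) (max (c-b) (a-b))) +
          min (e-b) (min (1-b) (min (c-b) (a-b))) = 0)
    (EC : max (0-c) (max (e-c) (max (a-c) (b-c))) +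
          min (0-c) (min (e-c) (min (a-c) (b-c))) = 0) :
    a = 1/2 ∧ b = (1+e)/2 ∧ c = (1+e)/4 := by
  simp only [max_sub_sub_right, min_sub_sub_right] at EA EB EC
  have EA' : max 0 (max 1 (max c b)) + min 0 (min 1 (min c b)) = 2*a := by linarith
  have EB' : max e (max 1 (max c a)) + min e (min 1 (min c a)) = 2*b := by linarith
  have EC' : max 0 (max e (max a b)) + min 0 (min e (min a b)) = 2*c := by linarith
  have f1 : (1:ℝ) ≤ max 0 (max 1 (max c b)) := le_max_of_le_right (le_max_left _ _)
  have f2 : min 0 (min 1 (min c b)) ≤ 0 := min_le_left _ _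
  have f3 : (1:ℝ) ≤ max e (max 1 (max c a)) := le_max_of_le_right (le_max_left _ _)
  have f4 : min e (min 1 (min c a)) ≤ e := min_le_left _ _
  have f5 : min 0 (min e (min a b)) ≤ 0 := min_le_left _ _
  have f6 : (0:ℝ) ≤ max 0 (max e (max a b)) := le_max_left _ _
  clear EA EB EC
  have hub : a ≤ 1 ∧ b ≤ 1 ∧ c ≤ 1 := by
    rcases max4_choice 0 1 c b with h1 | h1 | h1 | h1 <;>
      rcases max4_choice e 1 c a with h2 | h2 | h2 | h2 <;>
        rcases max4_choice 0 e a b with h3 | h3 | h3 | h3 <;>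
          exact ⟨by linarith only [EA', EB', EC', f1, f2, f3, f4, f5, f6, h1, h2, h3, he0, he1],
            by linarith only [EA', EB', EC', f1, f2, f3, f4, f5, f6, h1, h2, h3, he0, he1],
            by linarith only [EA', EB', EC', f1, f2, f3, f4, f5, f6, h1, h2, h3, he0, he1]⟩
  have hlb : 0 ≤ a ∧ 0 ≤ b ∧ 0 ≤ c := by
    rcases min4_choice 0 1 c b with h1 | h1 | h1 | h1 <;>
      rcases min4_choice e 1 c a with h2 | h2 | h2 | h2 <;>
        rcases min4_choice 0 e a b with h3 | h3 | h3 | h3 <;>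
          exact ⟨by linarith only [EA', EB', EC', f1, f2, f3, f4, f5, f6, h1, h2, h3, he0, he1],
            by linarith only [EA', EB', EC', f1, f2, f3, f4, f5, f6, h1, h2, h3, he0, he1],
            by linarith only [EA', EB', EC', f1, f2, f3, f4, f5, f6, h1, h2, h3, he0, he1]⟩
  obtain ⟨ha1, hb1, hc1⟩ := hub
  obtain ⟨ha0, hb0, hc0⟩ := hlb
  have hMA : max 0 (max 1 (max c b)) = 1 := by
    rw [max_eq_left (max_le hc1 hb1), max_eq_right (zero_le_one)]
  have hmA : min 0 (min 1 (min c b)) = 0 := by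
    rw [min_eq_right (min_le_of_left_le hc1), min_eq_left (le_min (by linarith) (by linarith))]
  have ha : a = 1/2 := by rw [hMA, hmA] at EA'; linarith
  have hMB : max e (max 1 (max c a)) = 1 := by
    rw [max_eq_left (max_le hc1 ha1), max_eq_right (by linarith : e ≤ (1:ℝ))]
  rcases le_total e c with hec | hec
  · -- e ≤ c
    have hmB : min e (min 1 (min c a)) = e :=
      min_eq_left (le_min (by linarith) (le_min hec (by linarith)))
    have hb : b = (1+e)/2 := by rw [hMB, hmB] at EB'; linarith
    have hMC : max 0 (max e (max a b)) = b := by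
      rw [max_eq_right (by linarith : a ≤ b), max_eq_right (by linarith : e ≤ b),
        max_eq_right (by linarith : (0:ℝ) ≤ b)]
    have hmC : min 0 (min e (min a b)) = 0 := by
      exact min_eq_left (le_min he0 (le_min ha0 hb0))
    have hc : c = (1+e)/4 := by rw [hMC, hmC] at EC'; linarith
    exact ⟨ha, hb, hc⟩
  · -- c ≤ e
    have hmB : min e (min 1 (min c a)) = c := by
      rw [min_eq_left (by linarith : c ≤ a), min_eq_right (by linarith : c ≤ (1:ℝ)),
        min_eq_right hec]
    have hb2 : 2*b = 1 + c := by rw [hMB, hmB] at EB'; linarith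
    have hMC : max 0 (max e (max a b)) = b := by
      rw [max_eq_right (by linarith : a ≤ b), max_eq_right (by linarith : e ≤ b),
        max_eq_right (by linarith : (0:ℝ) ≤ b)]
    have hmC : min 0 (min e (min a b)) = 0 := by
      exact min_eq_left (le_min he0 (le_min ha0 hb0))
    have hc2 : 2*c = b := by rw [hMC, hmC] at EC'; linarith
    have hc : c = 1/3 := by linarith
    have heq : e = 1/3 := le_antisymm he1 (by linarith)
    exact ⟨ha, by linarith, by linarith⟩

lemma hpsi_eval (i j : Fin 3) : psi i (q j) = (2:ℝ)⁻¹ • (q i + q j) := by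
  simp [psi, Prod.ext_iff]; constructor <;> ring

lemma nbhd12 : {y | adjN 1 M12 y} = {P1, P2, M01, M02} := by
  ext y; constructor
  · rintro ⟨hne, w, hw, hx, hy⟩
    rcases word1 w hw with h | h | h <;> rw [h] at hx hy
    · rcases hx with h' | h' | h'
      · exact absurd h'.symm dP0M12
      · exact absurd h'.symm dM01M12
      · exact absurd h'.symm dM02M12
    · rcases hy with rfl | rfl | rfl
      · exact Or.inr (Or.inr (Or.inl rfl))
      · exact Or.inl rfl
      · exact absurd rfl hne.symm
    · rcases hy with rfl | rfl | rfl
      · exact Or.inr (Or.inr (Or.inr rfl))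
      · exact absurd rfl hne.symm
      · exact Or.inr (Or.inl rfl)
  · have m1 : M12 ∈ psiW [1] '' V0 := by rw [himg1]; simp
    have m2 : M12 ∈ psiW [2] '' V0 := by rw [himg2]; simp
    rintro (rfl | rfl | rfl | rfl)
    · exact ⟨dP1M12.symm, [1], rfl, m1, by rw [himg1]; simp⟩
    · exact ⟨dP2M12.symm, [2], rfl, m2, by rw [himg2]; simp⟩
    · exact ⟨dM01M12.symm, [1], rfl, m1, by rw [himg1]; simp⟩
    · exact ⟨dM02M12.symm, [2], rfl, m2, by rw [himg2]; simp⟩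

lemma nbhd01 : {y | adjN 1 M01 y} = {P0, P1, M02, M12} := by
  ext y; constructor
  · rintro ⟨hne, w, hw, hx, hy⟩
    rcases word1 w hw with h | h | h <;> rw [h] at hx hy
    · rcases hy with rfl | rfl | rfl
      · exact Or.inl rfl
      · exact absurd rfl hne.symm
      · exact Or.inr (Or.inr (Or.inl rfl))
    · rcases hy with rfl | rfl | rfl
      · exact absurd rfl hne.symm
      · exact Or.inr (Or.inl rfl)
      · exact Or.inr (Or.inr (Or.inr rfl))
    · rcases hx with h' | h' | h'
      · exact absurd h' dM01M02
      · exact absurd h' dM01M12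
      · exact absurd h'.symm dP2M01
  · have m0 : M01 ∈ psiW [0] '' V0 := by rw [himg0]; simp
    have m1 : M01 ∈ psiW [1] '' V0 := by rw [himg1]; simp
    rintro (rfl | rfl | rfl | rfl)
    · exact ⟨dP0M01.symm, [0], rfl, m0, by rw [himg0]; simp⟩
    · exact ⟨dP1M01.symm, [1], rfl, m1, by rw [himg1]; simp⟩
    · exact ⟨dM01M02, [0], rfl, m0, by rw [himg0]; simp⟩
    · exact ⟨dM01M12, [1], rfl, m1, by rw [himg1]; simp⟩

lemma notV0 (x : ℝ × ℝ) (h0 : x ≠ P0) (h1 : x ≠ P1) (h2 : x ≠ P2) : x ∉ V0 := by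
  intro h
  rw [V0, hq0, hq1, hq2] at h
  simp only [Set.mem_insert_iff, Set.mem_singleton_iff] at h
  rcases h with h | h | h
  exacts [h0 h, h1 h, h2 h]

lemma mem02 : M02 ∈ Vn 1 \ V0 :=
  ⟨Set.mem_biUnion (show ([0] : List (Fin 3)) ∈ {w : List (Fin 3) | w.length = 1} from rfl)
    (by rw [himg0]; simp),
   notV0 _ (Ne.symm dP0M02) (Ne.symm dP1M02) (Ne.symm dP2M02)⟩

lemma mem12 : M12 ∈ Vn 1 \ V0 :=
  ⟨Set.mem_biUnion (show ([1] : List (Fin 3)) ∈ {w : List (Fin 3) | w.length = 1} from rfl)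
    (by rw [himg1]; simp),
   notV0 _ (Ne.symm dP0M12) (Ne.symm dP1M12) (Ne.symm dP2M12)⟩

lemma mem01 : M01 ∈ Vn 1 \ V0 :=
  ⟨Set.mem_biUnion (show ([0] : List (Fin 3)) ∈ {w : List (Fin 3) | w.length = 1} from rfl)
    (by rw [himg0]; simp),
   notV0 _ (Ne.symm dP0M01) (Ne.symm dP1M01) (Ne.symm dP2M01)⟩

lemma csSup4 (x1 x2 x3 x4 : ℝ) :
    sSup {x1, x2, x3, x4} = max x1 (max x2 (max x3 x4)) := by
  have h34 : BddAbove ({x3, x4} : Set ℝ) :=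
    ((Set.finite_singleton _).insert _).bddAbove
  have h234 : BddAbove ({x2, x3, x4} : Set ℝ) :=
    ((((Set.finite_singleton _).insert _)).insert _).bddAbove
  rw [csSup_insert h234 ⟨x2, by simp⟩, csSup_insert h34 ⟨x3, by simp⟩, csSup_pair]

lemma csInf4 (x1 x2 x3 x4 : ℝ) :
    sInf {x1, x2, x3, x4} = min x1 (min x2 (min x3 x4)) := by
  have h34 : BddBelow ({x3, x4} : Set ℝ) :=
    ((Set.finite_singleton _).insert _).bddBelow
  have h234 : BddBelow ({x2, x3, x4} : Set ℝ) :=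
    ((((Set.finite_singleton _).insert _)).insert _).bddBelow
  rw [csInf_insert h234 ⟨x2, by simp⟩, csInf_insert h34 ⟨x3, by simp⟩, csInf_pair]

theorem main (e : ℝ) (he : e ∈ Set.Icc (0 : ℝ) (1/3))
    (v : ℝ × ℝ → ℝ) (h1 : v (q 0) = 0) (h2 : v (q 1) = e) (h3 : v (q 2) = 1)
    (hharm : ∀ x ∈ Vn 1 \ V0, lapInf (adjN 1) v x = 0) :
    v ((2:ℝ)⁻¹ • (q 0 + q 2)) = 1/2 ∧
    v ((2:ℝ)⁻¹ • (q 1 + q 2)) = (1 + e)/2 ∧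
    v ((2:ℝ)⁻¹ • (q 0 + q 1)) = (1 + e)/4 := by
  rw [show (2:ℝ)⁻¹ • (q 0 + q 2) = M02 from (hpsi_eval 0 2).symm.trans c02,
      show (2:ℝ)⁻¹ • (q 1 + q 2) = M12 from (hpsi_eval 1 2).symm.trans c12,
      show (2:ℝ)⁻¹ • (q 0 + q 1) = M01 from (hpsi_eval 0 1).symm.trans c01]
  have hv0 : v P0 = 0 := h1
  have hv1 : v P1 = e := h2
  have hv2 : v P2 = 1 := h3
  have HA := hharm M02 mem02
  have HB := hharm M12 mem12
  have HC := hharm M01 mem01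
  unfold lapInf at HA HB HC
  rw [nbhd02, Set.image_insert_eq, Set.image_insert_eq, Set.image_insert_eq,
    Set.image_singleton, csSup4, csInf4, hv0, hv2] at HA
  rw [nbhd12, Set.image_insert_eq, Set.image_insert_eq, Set.image_insert_eq,
    Set.image_singleton, csSup4, csInf4, hv1, hv2] at HB
  rw [nbhd01, Set.image_insert_eq, Set.image_insert_eq, Set.image_insert_eq,
    Set.image_singleton, csSup4, csInf4, hv0, hv1] at HC
  exact arith e (v M02) (v M12) (v M01) he.1 he.2 HA HB HC

end SG

/-- Values of the infinity harmonic function on `V¹` for boundary data `0, e, 1`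
with `e ∈ [0, 1/3]`. -/
theorem stmt15 (e : ℝ) (he : e ∈ Set.Icc (0 : ℝ) (1/3))
    (v : ℝ × ℝ → ℝ) (h1 : v (q 0) = 0) (h2 : v (q 1) = e) (h3 : v (q 2) = 1)
    (hharm : ∀ x ∈ Vn 1 \ V0, lapInf (adjN 1) v x = 0) :
    v ((2:ℝ)⁻¹ • (q 0 + q 2)) = 1/2 ∧
    v ((2:ℝ)⁻¹ • (q 1 + q 2)) = (1 + e)/2 ∧
    v ((2:ℝ)⁻¹ • (q 0 + q 1)) = (1 + e)/4 := SG.main e he v h1 h2 h3 hharm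
end
end

section
/- Let g : V⁰ → ℝ with g(q₁)=0, g(q₂)=e ∈ (0, 1/7], g(q₃)=1. Let u¹ be the infinity harmonic function on V¹ with boundary data g, and u² the infinity harmonic function on V² with boundary data g. Then u¹(q₁₂) = (1+e)/4 while u²(q₁₂) = (3+4e)/12, so u²(q₁₂) ≠ u¹(q₁₂); in particular the restriction of u² to V¹ is not infinity harmonic on the level-1 graph. -/
open Filter Topology
open scoped Classical

noncomputable section

variable {V : Type*}

/-!
Infinity harmonic extensions are unique by a comparison principle: at a vertex where `u - v` is
maximal, and `u` largest among such vertices, `Δ∞u ≥ 0 ≥ Δ∞v` forces `u` and `v` to be constant on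
the neighbourhood, so the maximum of `u - v` propagates to the boundary. It therefore suffices to
exhibit the solutions on `V¹` and `V²`. Their values are affine in `e`, e.g.
`u¹(q₁₂) = (6 + 6e)/24` and `u²(q₁₂) = (6 + 8e)/24`, and for `e ∈ [0, 1/7]` the neighbours realising
the max and the min at each vertex do not depend on `e`; so harmonicity is checked by computation
at `e = 0` and `e = 1/7`, with the vertices encoded by integer coordinates in a triangular lattice.
-/

section Comparison

variable {W : Type*} {adj : W → W → Prop} {u v : W → ℝ} {x : W}

theorem lapInf_eq_of_forall_le {a b : W} (ha : adj x a) (hb : adj x b)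
    (hua : ∀ y, adj x y → u y ≤ u a) (hub : ∀ y, adj x y → u b ≤ u y) :
    lapInf adj u x = u a + u b - 2 * u x := by
  have hsup : IsGreatest ((fun y => u y - u x) '' {y | adj x y}) (u a - u x) :=
    ⟨⟨a, ha, rfl⟩, by rintro _ ⟨y, hy, rfl⟩; exact sub_le_sub_right (hua y hy) _⟩
  have hinf : IsLeast ((fun y => u y - u x) '' {y | adj x y}) (u b - u x) :=
    ⟨⟨b, hb, rfl⟩, by rintro _ ⟨y, hy, rfl⟩; exact sub_le_sub_right (hub y hy) _⟩
  rw [lapInf, hsup.csSup_eq, hinf.csInf_eq]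
  ring

theorem exists_lapInf_eq (hfin : {y | adj x y}.Finite) (hne : ∃ y, adj x y) :
    ∃ a b, adj x a ∧ adj x b ∧ (∀ y, adj x y → u y ≤ u a) ∧ (∀ y, adj x y → u b ≤ u y) ∧
      lapInf adj u x = u a + u b - 2 * u x := by
  obtain ⟨a, ha, hua⟩ := Set.exists_max_image _ u hfin hne
  obtain ⟨b, hb, hub⟩ := Set.exists_min_image _ u hfin hne
  exact ⟨a, b, ha, hb, hua, hub, lapInf_eq_of_forall_le ha hb hua hub⟩

theorem neighbor_eq_of_sub_isMax (hfin : {y | adj x y}.Finite) (hne : ∃ y, adj x y)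
    (hu : 0 ≤ lapInf adj u x) (hv : lapInf adj v x ≤ 0)
    (hsub : ∀ y, adj x y → u y - v y ≤ u x - v x)
    (hmax : ∀ y, adj x y → u y - v y = u x - v x → u y ≤ u x) {y : W} (hy : adj x y) :
    u y = u x ∧ v y = v x := by
  obtain ⟨a, b, ha, hb, hua, hub, hlu⟩ := exists_lapInf_eq (u := u) hfin hne
  obtain ⟨a', b', ha', hb', hva', hvb', hlv⟩ := exists_lapInf_eq (u := v) hfin hne
  -- `2 u x ≤ u a + u b ≤ (v a' + M) + (v b' + M) ≤ 2 v x + 2 M = 2 u x` for `M = u x - v x`,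
  -- so all of these are equalities; in particular `u - v` attains `M` at `a`.
  have h1 := hsub a ha
  have h2 := hsub b' hb'
  have h3 := hva' a ha
  have h4 := hub b' hb'
  have hwa : u a - v a = u x - v x := by linarith
  have h5 := hmax a ha hwa
  have := hua y hy
  have := hub y hy
  have := hva' y hy
  have := hvb' y hy
  constructor <;> linarith

theorem le_of_lapInf_nonneg_of_nonpos {I : Finset W} (rank : W → ℕ)
    (hfin : ∀ x ∈ I, {y | adj x y}.Finite)
    (hrank : ∀ x ∈ I, ∃ y, adj x y ∧ (y ∉ I ∨ rank y < rank x))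
    (hbdry : ∀ x ∈ I, ∀ y, adj x y → y ∉ I → u y ≤ v y)
    (hu : ∀ x ∈ I, 0 ≤ lapInf adj u x) (hv : ∀ x ∈ I, lapInf adj v x ≤ 0) :
    ∀ x ∈ I, u x ≤ v x := by
  by_contra! ⟨x₀, hx₀, hlt⟩
  obtain ⟨xM, hxM, hM⟩ := I.exists_max_image (fun x => u x - v x) ⟨x₀, hx₀⟩
  set M := u xM - v xM
  have hMpos : 0 < M := by linarith [hM x₀ hx₀]
  set S := I.filter fun x => u x - v x = M
  obtain ⟨xU, hxU, hU⟩ := S.exists_max_image u ⟨xM, Finset.mem_filter.2 ⟨hxM, rfl⟩⟩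
  set T := S.filter fun x => u x = u xU
  obtain ⟨x, hxT, hx⟩ := T.exists_min_image rank ⟨xU, Finset.mem_filter.2 ⟨hxU, rfl⟩⟩
  simp only [T, S, Finset.mem_filter] at hxT
  obtain ⟨⟨hxI, hxw⟩, hxu⟩ := hxT
  have hin : ∀ y, adj x y → u y - v y = M → y ∈ I := fun y hy hyM => by
    by_contra hyI
    linarith [hbdry x hxI y hy hyI]
  have hsub : ∀ y, adj x y → u y - v y ≤ u x - v x := fun y hy => by
    by_cases hyI : y ∈ I
    · linarith [hM y hyI]
    · linarith [hbdry x hxI y hy hyI]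
  have hmax : ∀ y, adj x y → u y - v y = u x - v x → u y ≤ u x := fun y hy hyM => by
    rw [hxw] at hyM
    linarith [hU y (Finset.mem_filter.2 ⟨hin y hy hyM, hyM⟩)]
  obtain ⟨y, hy, hyr⟩ := hrank x hxI
  have hne : ∃ y, adj x y := ⟨y, hy⟩
  obtain ⟨huy, hvy⟩ := neighbor_eq_of_sub_isMax (hfin x hxI) hne (hu x hxI) (hv x hxI) hsub hmax hy
  have hyM : u y - v y = M := by rw [huy, hvy, hxw]
  have hyT : y ∈ T := Finset.mem_filter.2 ⟨Finset.mem_filter.2 ⟨hin y hy hyM, hyM⟩, huy.trans hxu⟩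
  rcases hyr with hyI | hlt
  · exact hyI (hin y hy hyM)
  · exact absurd (hx y hyT) (not_le.2 hlt)

theorem eq_of_lapInf_eq_zero {I : Finset W} (rank : W → ℕ)
    (hfin : ∀ x ∈ I, {y | adj x y}.Finite)
    (hrank : ∀ x ∈ I, ∃ y, adj x y ∧ (y ∉ I ∨ rank y < rank x))
    (hbdry : ∀ x ∈ I, ∀ y, adj x y → y ∉ I → u y = v y)
    (hu : ∀ x ∈ I, lapInf adj u x = 0) (hv : ∀ x ∈ I, lapInf adj v x = 0) :
    ∀ x ∈ I, u x = v x := fun x hx =>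
  le_antisymm
    (le_of_lapInf_nonneg_of_nonpos rank hfin hrank (fun x hx y hy hyI => (hbdry x hx y hy hyI).le)
      (fun x hx => (hu x hx).ge) (fun x hx => (hv x hx).le) x hx)
    (le_of_lapInf_nonneg_of_nonpos rank hfin hrank (fun x hx y hy hyI => (hbdry x hx y hy hyI).ge)
      (fun x hx => (hv x hx).ge) (fun x hx => (hu x hx).le) x hx)

end Comparison

theorem lapInf_comp {W W' : Type*} {adj : W' → W' → Prop} {adj' : W → W → Prop} (f : W → W')
    (u : W' → ℝ) {x : W} (h : {y | adj (f x) y} = f '' {r | adj' x r}) :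
    lapInf adj u (f x) = lapInf adj' (u ∘ f) x := by
  simp only [lapInf, h, Set.image_image, Function.comp]

namespace Sierpinski

def latticePt (p : ℤ × ℤ) : ℝ × ℝ := ((p.1 : ℝ) / 8, (p.2 : ℝ) / 8 * Real.sqrt 3)

theorem latticePt_injective : Function.Injective latticePt := by
  rintro ⟨a, b⟩ ⟨c, d⟩ h
  have h3 : Real.sqrt 3 ≠ 0 := by positivity
  simp only [latticePt, Prod.mk.injEq, mul_left_inj' h3] at h
  obtain ⟨h1, h2⟩ := h
  rw [Prod.mk.injEq]
  constructor <;> [exact_mod_cast (div_left_inj' (by norm_num)).1 h1;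
    exact_mod_cast (div_left_inj' (by norm_num)).1 h2]

def cornerZ : Fin 3 → ℤ × ℤ := ![(0, 0), (8, 0), (4, 4)]

theorem q_eq_latticePt (k : Fin 3) : q k = latticePt (cornerZ k) := by
  fin_cases k <;> norm_num [q, cornerZ, latticePt, Prod.ext_iff]; ring

theorem psi_latticePt {i : Fin 3} {p m : ℤ × ℤ} (h : cornerZ i + p = m + m) :
    psi i (latticePt p) = latticePt m := by
  obtain ⟨h1, h2⟩ := Prod.ext_iff.1 h
  simp only [Prod.fst_add, Prod.snd_add] at h1 h2
  have h1' : ((cornerZ i).1 : ℝ) + p.1 = m.1 + m.1 := by exact_mod_cast h1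
  have h2' : ((cornerZ i).2 : ℝ) + p.2 = m.2 + m.2 := by exact_mod_cast h2
  simp only [psi, q_eq_latticePt, latticePt, Prod.ext_iff, Prod.fst_add, Prod.snd_add,
    Prod.smul_fst, Prod.smul_snd, Prod.fst_sub, Prod.snd_sub, smul_eq_mul]
  constructor
  · linear_combination h1' / 16
  · linear_combination Real.sqrt 3 / 16 * h2'

def midZ (p r : ℤ × ℤ) : ℤ × ℤ := ((p.1 + r.1) / 2, (p.2 + r.2) / 2)

-- The integer halving in `midZ` is exact on words of length `≤ 2` (see `psiW_q`).
def cellZ : List (Fin 3) → Fin 3 → ℤ × ℤ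
  | [], k => cornerZ k
  | i :: w, k => midZ (cornerZ i) (cellZ w k)

def words : ℕ → List (List (Fin 3))
  | 0 => [[]]
  | n + 1 => (words n).flatMap fun w => List.ofFn fun i : Fin 3 => i :: w

theorem mem_words {n : ℕ} {w : List (Fin 3)} : w ∈ words n ↔ w.length = n := by
  induction n generalizing w with
  | zero => simp [words]
  | succ n ih =>
    cases w with
    | nil => simp [words]
    | cons i w =>
      simp only [words, List.mem_flatMap, List.mem_ofFn, List.cons.injEq, ih, List.length_cons,
        Nat.add_right_cancel_iff]
      constructor
      · rintro ⟨v, hv, -, -, rfl⟩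
        exact hv
      · exact fun hw => ⟨w, hw, i, rfl, rfl⟩

theorem psiW_q {w : List (Fin 3)} (hw : w.length ≤ 2) (k : Fin 3) :
    psiW w (q k) = latticePt (cellZ w k) := by
  induction w with
  | nil => simp [psiW, q_eq_latticePt, cellZ]
  | cons i w ih =>
    have hmid : ∀ w ∈ words 0 ++ words 1, ∀ i k,
        cornerZ i + cellZ w k = cellZ (i :: w) k + cellZ (i :: w) k := by decide
    have hw' : w.length ≤ 1 := by simpa using hw
    have hmem : w ∈ words 0 ++ words 1 := by
      rw [List.mem_append, mem_words, mem_words]; omega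
    change psi i (psiW w (q k)) = _
    rw [ih (by omega)]
    exact psi_latticePt (hmid w hmem i k)

def cellList (w : List (Fin 3)) : List (ℤ × ℤ) := List.ofFn (cellZ w)

def adjZ (n : ℕ) (p r : ℤ × ℤ) : Prop :=
  p ≠ r ∧ ∃ w ∈ words n, p ∈ cellList w ∧ r ∈ cellList w

instance (n : ℕ) : DecidableRel (adjZ n) := fun _ _ => by unfold adjZ; infer_instance

def vertsZ (n : ℕ) : List (ℤ × ℤ) := (words n).flatMap cellList

def interiorZ (n : ℕ) : List (ℤ × ℤ) := (vertsZ n).filter (· ∉ List.ofFn cornerZ)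

def nbrsZ (n : ℕ) (p : ℤ × ℤ) : List (ℤ × ℤ) := (vertsZ n).filter (adjZ n p)

theorem mem_vertsZ_of_adjZ {n : ℕ} {p r : ℤ × ℤ} (h : adjZ n p r) : r ∈ vertsZ n := by
  obtain ⟨-, w, hw, -, hr⟩ := h
  exact List.mem_flatMap.2 ⟨w, hw, hr⟩

theorem mem_nbrsZ {n : ℕ} {p r : ℤ × ℤ} : r ∈ nbrsZ n p ↔ adjZ n p r := by
  simpa [nbrsZ] using mem_vertsZ_of_adjZ

theorem mem_psiW_image_iff {w : List (Fin 3)} (hw : w.length ≤ 2) {x : ℝ × ℝ} :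
    x ∈ psiW w '' V0 ↔ ∃ r ∈ cellList w, x = latticePt r := by
  simp [V0, cellList, psiW_q hw, eq_comm]

theorem adjN_latticePt_iff {n : ℕ} (hn : n ≤ 2) {p : ℤ × ℤ} {y : ℝ × ℝ} :
    adjN n (latticePt p) y ↔ ∃ r, adjZ n p r ∧ y = latticePt r := by
  constructor
  · rintro ⟨hne, w, hw, hp, hy⟩
    rw [mem_psiW_image_iff (hw ▸ hn)] at hp hy
    obtain ⟨p', hp', hpp'⟩ := hp
    obtain ⟨r, hr, rfl⟩ := hy
    obtain rfl := latticePt_injective hpp'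
    exact ⟨r, ⟨fun h => hne (h ▸ rfl), w, mem_words.2 hw, hp', hr⟩, rfl⟩
  · rintro ⟨r, ⟨hne, w, hw, hp, hr⟩, rfl⟩
    have hw' := mem_words.1 hw
    exact ⟨latticePt_injective.ne hne, w, hw', (mem_psiW_image_iff (hw' ▸ hn)).2 ⟨p, hp, rfl⟩,
      (mem_psiW_image_iff (hw' ▸ hn)).2 ⟨r, hr, rfl⟩⟩

theorem latticePt_mem_Vn_sdiff_V0 {n : ℕ} (hn : n ≤ 2) {p : ℤ × ℤ} (hp : p ∈ interiorZ n) :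
    latticePt p ∈ Vn n \ V0 := by
  simp only [interiorZ, vertsZ, List.mem_filter, List.mem_flatMap, decide_eq_true_eq] at hp
  obtain ⟨⟨w, hw, hpw⟩, hpV⟩ := hp
  have hw' := mem_words.1 hw
  refine ⟨Set.mem_iUnion₂.2 ⟨w, hw', (mem_psiW_image_iff (hw' ▸ hn)).2 ⟨p, hpw, rfl⟩⟩, ?_⟩
  simp only [V0, q_eq_latticePt, Set.mem_insert_iff, Set.mem_singleton_iff,
    latticePt_injective.eq_iff]
  simpa [List.mem_ofFn, Fin.exists_fin_succ, eq_comm] using hpV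

/-- At levels `1` and `2` every interior vertex is at distance at most `2` from a corner, so this
two-valued rank suffices for the comparison principle. -/
def rankZ (n : ℕ) (p : ℤ × ℤ) : ℕ := if ∃ b ∈ List.ofFn cornerZ, adjZ n p b then 0 else 1

def ReachesBoundary (n : ℕ) : Prop :=
  ∀ p ∈ interiorZ n, ∃ r ∈ nbrsZ n p, r ∉ interiorZ n ∨ rankZ n r < rankZ n p

def affineVal (e : ℝ) (c : ℤ × ℤ) : ℝ := (c.1 + c.2 * e) / 24

/-- `affineVal e c ≤ affineVal e d` at `e = 0` and at `e = 1/7`. -/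
def AffineLE (c d : ℤ × ℤ) : Prop := c.1 ≤ d.1 ∧ 7 * c.1 + c.2 ≤ 7 * d.1 + d.2

instance : DecidableRel AffineLE := fun _ _ => by unfold AffineLE; infer_instance

theorem affineVal_le_affineVal {c d : ℤ × ℤ} (h : AffineLE c d) {e : ℝ} (he0 : 0 ≤ e)
    (he1 : e ≤ 1 / 7) : affineVal e c ≤ affineVal e d := by
  obtain ⟨h0, h7⟩ := h
  have h0' : (c.1 : ℝ) ≤ d.1 := by exact_mod_cast h0
  have h7' : 7 * (c.1 : ℝ) + c.2 ≤ 7 * d.1 + d.2 := by exact_mod_cast h7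
  unfold affineVal
  -- `24 (affineVal e d - affineVal e c) = (1 - 7e) · (its value at 0) + e · 7 (its value at 1/7)`
  nlinarith [mul_nonneg (sub_nonneg.2 h0') (by linarith : (0 : ℝ) ≤ 1 - 7 * e),
    mul_nonneg (sub_nonneg.2 h7') he0]

def IsHarmonicTable (n : ℕ) (c : ℤ × ℤ → ℤ × ℤ) : Prop :=
  ∀ p ∈ interiorZ n, ∃ a ∈ nbrsZ n p, ∃ b ∈ nbrsZ n p,
    (∀ y ∈ nbrsZ n p, AffineLE (c y) (c a) ∧ AffineLE (c b) (c y)) ∧ c a + c b = c p + c p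

theorem lapInf_affineVal {n : ℕ} {c : ℤ × ℤ → ℤ × ℤ} (hc : IsHarmonicTable n c) {e : ℝ}
    (he0 : 0 ≤ e) (he1 : e ≤ 1 / 7) {p : ℤ × ℤ} (hp : p ∈ interiorZ n) :
    lapInf (adjZ n) (affineVal e ∘ c) p = 0 := by
  obtain ⟨a, ha, b, hb, hab, hsum⟩ := hc p hp
  rw [lapInf_eq_of_forall_le (u := affineVal e ∘ c) (mem_nbrsZ.1 ha) (mem_nbrsZ.1 hb)
    (fun y hy => affineVal_le_affineVal (hab y (mem_nbrsZ.2 hy)).1 he0 he1)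
    (fun y hy => affineVal_le_affineVal (hab y (mem_nbrsZ.2 hy)).2 he0 he1)]
  obtain ⟨h1, h2⟩ := Prod.ext_iff.1 hsum
  simp only [Prod.fst_add, Prod.snd_add] at h1 h2
  have h1' : ((c a).1 : ℝ) + (c b).1 = (c p).1 + (c p).1 := by exact_mod_cast h1
  have h2' : ((c a).2 : ℝ) + (c b).2 = (c p).2 + (c p).2 := by exact_mod_cast h2
  simp only [Function.comp, affineVal]
  linear_combination h1' / 24 + e / 24 * h2'

def solution1 : ℤ × ℤ → ℤ × ℤ
  | (8, 0) => (0, 24)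
  | (4, 4) => (24, 0)
  | (4, 0) => (6, 6)
  | (2, 2) => (12, 0)
  | (6, 2) => (12, 12)
  | _ => (0, 0)

def solution2 : ℤ × ℤ → ℤ × ℤ
  | (8, 0) => (0, 24)
  | (4, 4) => (24, 0)
  | (4, 0) => (6, 8)
  | (2, 2) => (12, 0)
  | (6, 2) => (12, 12)
  | (2, 0) => (4, 0)
  | (1, 1) => (6, 0)
  | (3, 1) => (8, 0)
  | (6, 0) => (4, 20)
  | (7, 1) => (6, 18)
  | (5, 1) => (8, 16)
  | (3, 3) => (18, 0)
  | (5, 3) => (18, 6)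
  | (4, 2) => (15, 3)
  | _ => (0, 0)

theorem isHarmonicTable_solution1 : IsHarmonicTable 1 solution1 := by
  unfold IsHarmonicTable; decide

theorem isHarmonicTable_solution2 : IsHarmonicTable 2 solution2 := by
  unfold IsHarmonicTable; decide

theorem reachesBoundary_one : ReachesBoundary 1 := by
  unfold ReachesBoundary; decide

theorem reachesBoundary_two : ReachesBoundary 2 := by
  unfold ReachesBoundary; decide

theorem eq_affineVal_of_lapInf_eq_zero {n : ℕ} (hn : n ≤ 2) {c : ℤ × ℤ → ℤ × ℤ}
    (hc : IsHarmonicTable n c) (hreach : ReachesBoundary n)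
    (hcorner : c (cornerZ 0) = (0, 0) ∧ c (cornerZ 1) = (0, 24) ∧ c (cornerZ 2) = (24, 0))
    {e : ℝ} (he0 : 0 ≤ e) (he1 : e ≤ 1 / 7) {g u : ℝ × ℝ → ℝ}
    (hg0 : g (q 0) = 0) (hg1 : g (q 1) = e) (hg2 : g (q 2) = 1) (hub : ∀ x ∈ V0, u x = g x)
    (hu : ∀ x ∈ Vn n \ V0, lapInf (adjN n) u x = 0) {p : ℤ × ℤ} (hp : p ∈ interiorZ n) :
    u (latticePt p) = affineVal e (c p) := by
  have hnbr (p : ℤ × ℤ) : {y | adjN n (latticePt p) y} = latticePt '' {r | adjZ n p r} := by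
    ext y
    simp [adjN_latticePt_iff hn, eq_comm]
  have hq (k : Fin 3) : u (latticePt (cornerZ k)) = affineVal e (c (cornerZ k)) := by
    rw [← q_eq_latticePt, hub _ (by fin_cases k <;> simp [V0])]
    obtain ⟨h0, h1, h2⟩ := hcorner
    fin_cases k <;> simp [affineVal, *]
  refine eq_of_lapInf_eq_zero (adj := adjZ n) (I := (interiorZ n).toFinset) (u := u ∘ latticePt)
    (v := affineVal e ∘ c) (rankZ n) ?_ ?_ ?_ ?_ ?_ p (List.mem_toFinset.2 hp)
  · exact fun _ _ => (vertsZ n).finite_toSet.subset fun r hr => mem_vertsZ_of_adjZ hr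
  · intro x hx
    obtain ⟨r, hr, h⟩ := hreach x (List.mem_toFinset.1 hx)
    exact ⟨r, mem_nbrsZ.1 hr, by simpa using h⟩
  · intro x _ y hy hyI
    have hyc : y ∈ List.ofFn cornerZ := by
      by_contra h
      exact hyI (List.mem_toFinset.2 (List.mem_filter.2 ⟨mem_vertsZ_of_adjZ hy, by simpa using h⟩))
    obtain ⟨k, rfl⟩ := List.mem_ofFn.1 hyc
    exact hq k
  · intro x hx
    rw [← lapInf_comp latticePt u (hnbr x)]
    exact hu _ (latticePt_mem_Vn_sdiff_V0 hn (List.mem_toFinset.1 hx))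
  · exact fun x hx => lapInf_affineVal hc he0 he1 (List.mem_toFinset.1 hx)

end Sierpinski

open Sierpinski in
/-- Incompatibility of infinity harmonic extensions across levels:
`u¹(q₁₂) = (1+e)/4` but `u²(q₁₂) = (3+4e)/12`, so `u²` restricted to `V¹`
is not infinity harmonic on the level-1 graph. -/
theorem stmt16 (e : ℝ) (he : e ∈ Set.Ioc (0 : ℝ) (1/7))
    (g u1 u2 : ℝ × ℝ → ℝ)
    (hg1 : g (q 0) = 0) (hg2 : g (q 1) = e) (hg3 : g (q 2) = 1)
    (hu1b : ∀ x ∈ V0, u1 x = g x) (hu1 : ∀ x ∈ Vn 1 \ V0, lapInf (adjN 1) u1 x = 0)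
    (hu2b : ∀ x ∈ V0, u2 x = g x) (hu2 : ∀ x ∈ Vn 2 \ V0, lapInf (adjN 2) u2 x = 0) :
    u1 ((2:ℝ)⁻¹ • (q 0 + q 1)) = (1 + e)/4 ∧
    u2 ((2:ℝ)⁻¹ • (q 0 + q 1)) = (3 + 4*e)/12 ∧
    u2 ((2:ℝ)⁻¹ • (q 0 + q 1)) ≠ u1 ((2:ℝ)⁻¹ • (q 0 + q 1)) ∧
    ¬ (∀ x ∈ Vn 1 \ V0, lapInf (adjN 1) u2 x = 0) := by
  obtain ⟨he0, he1⟩ := he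
  have hmid : (2:ℝ)⁻¹ • (q 0 + q 1) = latticePt (4, 0) := by
    norm_num [q, latticePt, Prod.ext_iff]
  have level1 {u : ℝ × ℝ → ℝ} (hub : ∀ x ∈ V0, u x = g x)
      (hu : ∀ x ∈ Vn 1 \ V0, lapInf (adjN 1) u x = 0) : u (latticePt (4, 0)) = (1 + e) / 4 := by
    rw [eq_affineVal_of_lapInf_eq_zero (by norm_num) isHarmonicTable_solution1 reachesBoundary_one
      (by decide) he0.le he1 hg1 hg2 hg3 hub hu (by decide)]
    simp only [affineVal, show solution1 (4, 0) = (6, 6) from rfl]; ring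
  have h2 : u2 (latticePt (4, 0)) = (3 + 4 * e) / 12 := by
    rw [eq_affineVal_of_lapInf_eq_zero le_rfl isHarmonicTable_solution2 reachesBoundary_two
      (by decide) he0.le he1 hg1 hg2 hg3 hu2b hu2 (by decide)]
    simp only [affineVal, show solution2 (4, 0) = (6, 8) from rfl]; ring
  rw [hmid, h2, level1 hu1b hu1]
  refine ⟨rfl, rfl, fun h => by linarith, fun hu2' => ?_⟩
  linarith [level1 hu2b hu2']
end
end

section
/- Fix n and for p ∈ [1,∞) let uⁿ_p be the p-harmonic function on the pre-fractal Vⁿ (minimizer of the discrete p-energy) with uⁿ_p = g on V⁰. Then uⁿ_p converges pointwise on Vⁿ as p → ∞ to the unique absolutely minimizing Lipschitz extension uⁿ ∈ AMLE(Vⁿ) with uⁿ = g on V⁰. -/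
open Filter Topology
open scoped Classical

noncomputable section

variable {V : Type*}

/-- The discrete `p`-energy on `Vⁿ`. -/
def Ip (n : ℕ) (p : ℝ) (u : ℝ × ℝ → ℝ) : ℝ :=
  (∑' x : Vn n, ∑' y : {y : ℝ × ℝ // adjN n x.1 y}, |(u y.1 - u x.1) / deltaN n| ^ p) ^ (1/p)

/-!
For `p ≥ 1` the minimizer `u_p` has `p`-energy at most that of `g`, and `ℓᵖ ≤ ℓ¹` turns this
into a bound on every edge increment of `u_p` that does not depend on `p`. As `Vⁿ` is finite
and connected to `V⁰`, the family `(u_p)` is bounded, so every sequence `p_k → ∞` has a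
subsequence along which `u_{p_k}` converges on `Vⁿ`.

Perturbing `u_p` at an interior vertex `x` gives the Euler–Lagrange equation
`∑_{y ~ x} (u(y) - u(x)) |u(y) - u(x)|^(p-2) = 0`. As `p → ∞` the increments of largest modulus
dominate this sum, so the largest and the smallest increment of the limit at `x` must cancel:
the limit is infinity harmonic, with boundary values `g`. By the comparison principle for the
graph infinity Laplacian such an extension is unique, so every subsequential limit is `uⁿ`.
-/

theorem Real.sum_rpow_le_rpow_sum {ι : Type*} {s : Finset ι} {f : ι → ℝ} {p : ℝ} (hp : 1 ≤ p)
    (hf : ∀ i ∈ s, 0 ≤ f i) : ∑ i ∈ s, f i ^ p ≤ (∑ i ∈ s, f i) ^ p := by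
  classical
  induction s using Finset.induction_on with
  | empty => simp [Real.zero_rpow (by linarith : p ≠ 0)]
  | insert i s hi ih =>
    rw [Finset.forall_mem_insert] at hf
    rw [Finset.sum_insert hi, Finset.sum_insert hi]
    calc f i ^ p + ∑ j ∈ s, f j ^ p ≤ f i ^ p + (∑ j ∈ s, f j) ^ p := by gcongr; exact ih hf.2
      _ ≤ (f i + ∑ j ∈ s, f j) ^ p :=
        Real.add_rpow_le_rpow_add hf.1 (Finset.sum_nonneg hf.2) hp

theorem mul_abs_rpow_of_nonneg {a : ℝ} (ha : 0 ≤ a) {e : ℝ} (he : 0 ≤ e) :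
    a * |a| ^ e = a ^ (e + 1) := by
  rw [abs_of_nonneg ha, Real.rpow_add_one' ha (by linarith), mul_comm]

theorem mul_abs_rpow_of_neg {a : ℝ} (ha : a < 0) {e : ℝ} (he : 0 ≤ e) :
    a * |a| ^ e = -(-a) ^ (e + 1) := by
  rw [abs_of_neg ha, Real.rpow_add_one' (by linarith) (by linarith)]
  ring

theorem sum_mul_abs_rpow_pos {α : Type*} {s : Finset α} {a : α → ℝ} {e m P : ℝ}
    (he : 0 ≤ e) (hm : 0 ≤ m) (hP : 0 ≤ P) {y₁ : α} (hy₁ : y₁ ∈ s) (hPy₁ : P ≤ a y₁)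
    (hneg : ∀ y ∈ s, a y < 0 → -a y ≤ m) (hdom : s.card * m ^ (e + 1) < P ^ (e + 1)) :
    0 < ∑ y ∈ s, a y * |a y| ^ e := by
  have hterm : ∀ y ∈ s, 0 ≤ a y * |a y| ^ e + m ^ (e + 1) := fun y hy => by
    rcases lt_or_ge (a y) 0 with hya | hya
    · rw [mul_abs_rpow_of_neg hya he]
      linarith [Real.rpow_le_rpow (by linarith) (hneg y hy hya) (by linarith : 0 ≤ e + 1)]
    · rw [mul_abs_rpow_of_nonneg hya he]
      positivity
  have hy₁term : P ^ (e + 1) ≤ a y₁ * |a y₁| ^ e := by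
    rw [mul_abs_rpow_of_nonneg (hP.trans hPy₁) he]
    exact Real.rpow_le_rpow hP hPy₁ (by linarith)
  have hsum := Finset.single_le_sum hterm hy₁
  rw [Finset.sum_add_distrib, Finset.sum_const, nsmul_eq_mul] at hsum
  nlinarith [Real.rpow_nonneg hm (e + 1)]

theorem hasDerivAt_abs_add_mul_rpow {p : ℝ} (hp : 1 < p) (c k : ℝ) :
    HasDerivAt (fun t => |c + t * k| ^ p) (k * (p * (c * |c| ^ (p - 2)))) 0 := by
  have hlin : HasDerivAt (fun t : ℝ => c + t * k) k 0 := by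
    simpa using ((hasDerivAt_id (0 : ℝ)).mul_const k).const_add c
  have h := (hasDerivAt_abs_rpow (c + 0 * k) hp).comp 0 hlin
  simp only [zero_mul, add_zero] at h
  rw [show k * (p * (c * |c| ^ (p - 2))) = p * |c| ^ (p - 2) * c * k by ring]
  exact h

theorem add_nonpos_of_sum_mul_abs_rpow_eq_zero {α : Type*} {s : Finset α} {a : ℕ → α → ℝ}
    {d : α → ℝ} {e : ℕ → ℝ} (he : Tendsto e atTop atTop)
    (ha : ∀ y ∈ s, Tendsto (fun k => a k y) atTop (𝓝 (d y)))
    (hsum : ∀ᶠ k in atTop, ∑ y ∈ s, a k y * |a k y| ^ e k = 0)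
    {y₁ : α} (hy₁ : y₁ ∈ s) {b : ℝ} (hb : ∀ y ∈ s, b ≤ d y) : d y₁ + b ≤ 0 := by
  -- Otherwise, for large `k`, the term at `y₁` (at least `P ^ (e k + 1)`) outweighs all the
  -- negative terms (each at least `-m ^ (e k + 1)` with `m < P`).
  by_contra! hpos
  set δ := d y₁ + b with hδ
  set P := d y₁ - δ / 4 with hPdef
  set m := max (-b + δ / 4) (P / 2) with hmdef
  have hP : 0 < P := by linarith [hb y₁ hy₁]
  have hm : 0 < m := lt_max_of_lt_right (by linarith)
  have hmP : m < P := max_lt (by linarith) (by linarith)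
  have hclose : ∀ᶠ k in atTop, ∀ y ∈ s, dist (a k y) (d y) ≤ δ / 4 :=
    (eventually_all_finset s).2 fun y hy =>
      (ha y hy).eventually (Metric.closedBall_mem_nhds (d y) (by positivity))
  have hgrow : ∀ᶠ k in atTop, (s.card : ℝ) < (P / m) ^ (e k + 1) :=
    ((tendsto_rpow_atTop_of_base_gt_one _ ((one_lt_div hm).2 hmP)).comp
      (tendsto_atTop_add_const_right _ 1 he)).eventually_gt_atTop _
  obtain ⟨k, hk0, hkclose, hkgrow, hke⟩ :=
    (hsum.and (hclose.and (hgrow.and (he.eventually_ge_atTop 0)))).exists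
  have hlow : ∀ y ∈ s, d y - δ / 4 ≤ a k y := fun y hy =>
    by linarith [(abs_le.1 (Real.dist_eq _ _ ▸ hkclose y hy)).1]
  refine (sum_mul_abs_rpow_pos hke hm.le hP.le hy₁ (hlow y₁ hy₁) (fun y hy _ => ?_) ?_).ne' hk0
  · linarith [hlow y hy, hb y hy, le_max_left (-b + δ / 4) (P / 2)]
  · rwa [Real.div_rpow hP.le hm.le, lt_div_iff₀ (by positivity)] at hkgrow

theorem exists_subseq_tendsto_of_bounded {V : Type*} {S : Finset V} {f : ℕ → V → ℝ}
    (hf : ∀ z ∈ S, ∃ C, ∀ᶠ k in atTop, |f k z| ≤ C) :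
    ∃ φ : ℕ → ℕ, StrictMono φ ∧
      ∃ v : V → ℝ, ∀ z ∈ S, Tendsto (fun k => f (φ k) z) atTop (𝓝 (v z)) := by
  choose! C hC using hf
  have hcpt : IsCompact (Set.univ.pi fun z : S => Metric.closedBall (0 : ℝ) (C z)) :=
    isCompact_univ_pi fun _ => isCompact_closedBall _ _
  have hmem : ∃ᶠ k in atTop, (fun z : S => f k z) ∈ Set.univ.pi fun z : S =>
      Metric.closedBall (0 : ℝ) (C z) :=
    ((eventually_all_finset S).2 hC).frequently.mono fun k hk z _ => by simpa using hk z z.2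
  obtain ⟨a, -, φ, hφ, ha⟩ := hcpt.tendsto_subseq' hmem
  refine ⟨φ, hφ, fun z => if hz : z ∈ S then a ⟨z, hz⟩ else 0, fun z hz => ?_⟩
  simpa [hz] using tendsto_pi_nhds.1 ha ⟨z, hz⟩

theorem exists_abs_sub_le_of_reflTransGen {α : Type*} {r : α → α → Prop} {x y : α}
    (h : Relation.ReflTransGen r x y) :
    ∃ k : ℕ, ∀ (u : α → ℝ) (C : ℝ), (∀ a b, r a b → |u b - u a| ≤ C) → |u x - u y| ≤ k * C := by
  induction h using Relation.ReflTransGen.head_induction_on with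
  | refl => exact ⟨0, fun u C _ => by simp⟩
  | @head x z hxz _ ih =>
    obtain ⟨k, hk⟩ := ih
    refine ⟨k + 1, fun u C hC => ?_⟩
    calc |u x - u y| ≤ |u z - u x| + |u z - u y| := by
          rw [abs_sub_comm (u z)]
          exact abs_sub_le _ _ _
      _ ≤ (k + 1 : ℕ) * C := by
          push_cast
          linarith [hC _ _ hxz, hk u C hC]

theorem tsum_subtype_eq_sum {α β : Type*} [AddCommMonoid α] [TopologicalSpace α] {P : β → Prop}
    (s : Finset β) (hs : ∀ b, P b ↔ b ∈ s) (f : β → α) : ∑' b : {b // P b}, f b = ∑ b ∈ s, f b :=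
  ((Equiv.subtypeEquivRight hs).tsum_eq fun b => f b.1).trans (Finset.tsum_subtype s f)

namespace SimpleGraph

variable {V : Type*} (G : SimpleGraph V) [G.LocallyFinite]

def pEnergy (S : Finset V) (p : ℝ) (u : V → ℝ) : ℝ :=
  ∑ x ∈ S, ∑ y ∈ G.neighborFinset x, |u y - u x| ^ p

variable {G} {S : Finset V} {p : ℝ} {u : V → ℝ}

theorem pEnergy_nonneg : 0 ≤ G.pEnergy S p u :=
  Finset.sum_nonneg fun _ _ => Finset.sum_nonneg fun _ _ => by positivity

theorem rpow_abs_sub_le_pEnergy {x y : V} (hx : x ∈ S) (hxy : G.Adj x y) :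
    |u y - u x| ^ p ≤ G.pEnergy S p u :=
  (Finset.single_le_sum (f := fun y => |u y - u x| ^ p) (fun _ _ => by positivity)
    ((G.mem_neighborFinset x y).2 hxy)).trans
  (Finset.single_le_sum (f := fun x => ∑ y ∈ G.neighborFinset x, |u y - u x| ^ p)
    (fun _ _ => Finset.sum_nonneg fun _ _ => by positivity) hx)

theorem abs_sub_le_pEnergy_rpow (hp : 0 < p) {x y : V} (hx : x ∈ S) (hxy : G.Adj x y) :
    |u y - u x| ≤ G.pEnergy S p u ^ p⁻¹ := by
  rw [← Real.rpow_rpow_inv (abs_nonneg (u y - u x)) hp.ne']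
  gcongr
  exact rpow_abs_sub_le_pEnergy hx hxy

theorem pEnergy_rpow_le_pEnergy_one (hp : 1 ≤ p) : G.pEnergy S p u ^ p⁻¹ ≤ G.pEnergy S 1 u := by
  have h : G.pEnergy S p u ≤ G.pEnergy S 1 u ^ p := by
    simp only [pEnergy, Real.rpow_one]
    calc _ ≤ ∑ x ∈ S, (∑ y ∈ G.neighborFinset x, |u y - u x|) ^ p :=
          Finset.sum_le_sum fun _ _ => Real.sum_rpow_le_rpow_sum hp fun _ _ => abs_nonneg _
      _ ≤ _ := Real.sum_rpow_le_rpow_sum hp fun _ _ => Finset.sum_nonneg fun _ _ => abs_nonneg _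
  calc G.pEnergy S p u ^ p⁻¹ ≤ (G.pEnergy S 1 u ^ p) ^ p⁻¹ := by gcongr; exact pEnergy_nonneg
    _ = G.pEnergy S 1 u := Real.rpow_rpow_inv pEnergy_nonneg (by linarith)

theorem sum_sum_neighborFinset_swap {M : Type*} [AddCommMonoid M]
    (hS : ∀ z ∈ S, ∀ y, G.Adj z y → y ∈ S) (f : V → V → M) :
    ∑ x ∈ S, ∑ y ∈ G.neighborFinset x, f x y = ∑ x ∈ S, ∑ y ∈ G.neighborFinset x, f y x :=
  Finset.sum_comm' fun x y => by
    simp only [mem_neighborFinset]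
    exact ⟨fun h => ⟨h.2.symm, hS x h.1 y h.2⟩, fun h => ⟨hS y h.2 x h.1, h.1.symm⟩⟩

theorem sum_mul_abs_rpow_eq_zero_of_forall_pEnergy_le (hS : ∀ z ∈ S, ∀ y, G.Adj z y → y ∈ S)
    (hp : 1 < p) {x : V} (hx : x ∈ S)
    (hmin : ∀ t : ℝ, G.pEnergy S p u ≤ G.pEnergy S p (u + t • Pi.single x 1)) :
    ∑ y ∈ G.neighborFinset x, (u y - u x) * |u y - u x| ^ (p - 2) = 0 := by
  set e : V → ℝ := Pi.single x 1
  set D : ℝ → ℝ := fun s => p * (s * |s| ^ (p - 2))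
  have hderiv : HasDerivAt (fun t : ℝ => G.pEnergy S p (u + t • e))
      (∑ z ∈ S, ∑ y ∈ G.neighborFinset z, (e y - e z) * D (u y - u z)) 0 := by
    unfold pEnergy
    refine HasDerivAt.fun_sum fun z _ => HasDerivAt.fun_sum fun y _ => ?_
    refine (hasDerivAt_abs_add_mul_rpow hp (u y - u z) (e y - e z)).congr_of_eventuallyEq
      (Eventually.of_forall fun t => ?_)
    simp only [Pi.add_apply, Pi.smul_apply, smul_eq_mul]
    ring_nf
  have hlocmin : IsLocalMin (fun t : ℝ => G.pEnergy S p (u + t • e)) 0 :=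
    Eventually.of_forall fun t => by simpa using hmin t
  have hswap : ∑ z ∈ S, ∑ y ∈ G.neighborFinset z, e y * D (u y - u z) =
      -∑ z ∈ S, ∑ y ∈ G.neighborFinset z, e z * D (u y - u z) := by
    rw [sum_sum_neighborFinset_swap hS, ← Finset.sum_neg_distrib]
    refine Finset.sum_congr rfl fun z _ => ?_
    rw [← Finset.sum_neg_distrib]
    refine Finset.sum_congr rfl fun y _ => ?_
    simp only [D, ← neg_sub (u z) (u y), abs_neg]
    ring
  have hsingle : ∑ z ∈ S, ∑ y ∈ G.neighborFinset z, e z * D (u y - u z) =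
      ∑ y ∈ G.neighborFinset x, D (u y - u x) := by
    simp only [e, Pi.single_apply, ite_mul, one_mul, zero_mul, Finset.sum_ite_irrel,
      Finset.sum_const_zero, Finset.sum_ite_eq', if_pos hx]
  have h := hlocmin.hasDerivAt_eq_zero hderiv
  simp only [sub_mul, Finset.sum_sub_distrib, hswap, hsingle] at h
  have hD : ∑ y ∈ G.neighborFinset x, D (u y - u x) = 0 := by linarith
  rw [← Finset.mul_sum] at hD
  exact (mul_eq_zero.1 hD).resolve_left (by linarith)

theorem exists_lapInf_eq (u : V → ℝ) {x y₀ : V} (hy₀ : G.Adj x y₀) :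
    ∃ ymax ymin, G.Adj x ymax ∧ G.Adj x ymin ∧ (∀ y, G.Adj x y → u ymin ≤ u y ∧ u y ≤ u ymax) ∧
      lapInf G.Adj u x = (u ymax - u x) + (u ymin - u x) := by
  have hne : (G.neighborFinset x).Nonempty := ⟨y₀, (G.mem_neighborFinset x y₀).2 hy₀⟩
  obtain ⟨ymax, hymax, hmax⟩ := (G.neighborFinset x).exists_max_image u hne
  obtain ⟨ymin, hymin, hmin⟩ := (G.neighborFinset x).exists_min_image u hne
  simp only [mem_neighborFinset] at hymax hymin hmax hmin
  refine ⟨ymax, ymin, hymax, hymin, fun y hy => ⟨hmin y hy, hmax y hy⟩, ?_⟩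
  have hsup : IsGreatest ((fun y => u y - u x) '' {y | G.Adj x y}) (u ymax - u x) :=
    ⟨⟨ymax, hymax, rfl⟩, by rintro _ ⟨y, hy, rfl⟩; exact sub_le_sub_right (hmax y hy) _⟩
  have hinf : IsLeast ((fun y => u y - u x) '' {y | G.Adj x y}) (u ymin - u x) :=
    ⟨⟨ymin, hymin, rfl⟩, by rintro _ ⟨y, hy, rfl⟩; exact sub_le_sub_right (hmin y hy) _⟩
  rw [lapInf, hsup.csSup_eq, hinf.csInf_eq]

theorem eq_of_lapInf_nonneg_of_lapInf_nonpos {u v : V → ℝ} {z y₀ : V} (hy₀ : G.Adj z y₀)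
    (hu : 0 ≤ lapInf G.Adj u z) (hv : lapInf G.Adj v z ≤ 0)
    (hmax : ∀ y, G.Adj z y → u y - v y ≤ u z - v z)
    (hmin : ∀ y, G.Adj z y → u y - v y = u z - v z → u z ≤ u y) :
    ∀ y, G.Adj z y → u y = u z ∧ v y = v z := by
  obtain ⟨amax, amin, hamax, hamin, hua, hlu⟩ := exists_lapInf_eq u hy₀
  obtain ⟨bmax, bmin, hbmax, hbmin, hvb, hlv⟩ := exists_lapInf_eq v hy₀
  have hbminu : u z ≤ u bmin := hmin bmin hbmin <| le_antisymm (hmax bmin hbmin) <| by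
    linarith [hmax amax hamax, (hua bmin hbmin).1, (hvb amax hamax).2]
  intro y hy
  have := hmax bmin hbmin
  constructor <;> linarith [hmax y hy, hmax amax hamax, hua y hy, hvb y hy, hvb amax hamax,
    (hua bmin hbmin).1]

theorem le_of_lapInf_nonneg_of_lapInf_nonpos {S : Finset V} {B : Set V}
    (hS : ∀ z ∈ S, ∀ y, G.Adj z y → y ∈ S)
    (hreach : ∀ x ∈ S, ∃ b ∈ B, Relation.ReflTransGen G.Adj x b) {u v : V → ℝ}
    (hu : ∀ x ∈ S, x ∉ B → 0 ≤ lapInf G.Adj u x) (hv : ∀ x ∈ S, x ∉ B → lapInf G.Adj v x ≤ 0)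
    (hB : ∀ x ∈ B, u x ≤ v x) : ∀ x ∈ S, u x ≤ v x := by
  by_contra! ⟨x₀, hx₀, hlt⟩
  obtain ⟨z₀, hz₀, hz₀max⟩ := S.exists_max_image (fun z => u z - v z) ⟨x₀, hx₀⟩
  set T := S.filter (fun z => u z - v z = u z₀ - v z₀)
  have hT : ∀ {z}, z ∈ T ↔ z ∈ S ∧ u z - v z = u z₀ - v z₀ := Finset.mem_filter
  have hT_not_B : ∀ z ∈ T, z ∉ B := fun z hz hzB => by
    linarith [hB z hzB, (hT.1 hz).2, hz₀max x₀ hx₀]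
  -- A path from a point of the argmax set `T` at which `u` is least never leaves `T`.
  obtain ⟨x, hxT, hxmin⟩ := T.exists_min_image u ⟨z₀, hT.2 ⟨hz₀, rfl⟩⟩
  obtain ⟨b, hbB, hxb⟩ := hreach x (hT.1 hxT).1
  suffices ∀ z, Relation.ReflTransGen G.Adj z b → z ∈ T → u z = u x → b ∈ T from
    hT_not_B b (this x hxb hxT rfl) hbB
  intro z hzb
  induction hzb using Relation.ReflTransGen.head_induction_on with
  | refl => exact fun hb _ => hb
  | @head z c hzc _ ih =>
    intro hzT hzx
    have hzS := (hT.1 hzT).1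
    have hmax : ∀ y, G.Adj z y → u y - v y ≤ u z - v z := fun y hy =>
      (hT.1 hzT).2 ▸ hz₀max y (hS z hzS y hy)
    have hc := eq_of_lapInf_nonneg_of_lapInf_nonpos hzc (hu z hzS (hT_not_B z hzT))
      (hv z hzS (hT_not_B z hzT)) hmax
      (fun y hy hyz => hzx ▸ hxmin y (hT.2 ⟨hS z hzS y hy, (hT.1 hzT).2 ▸ hyz⟩)) c hzc
    exact ih (hT.2 ⟨hS z hzS c hzc, by rw [hc.1, hc.2]; exact (hT.1 hzT).2⟩) (hc.1.trans hzx)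

theorem eq_of_lapInf_eq_zero {S : Finset V} {B : Set V}
    (hS : ∀ z ∈ S, ∀ y, G.Adj z y → y ∈ S)
    (hreach : ∀ x ∈ S, ∃ b ∈ B, Relation.ReflTransGen G.Adj x b) {u v : V → ℝ}
    (hu : ∀ x ∈ S, x ∉ B → lapInf G.Adj u x = 0) (hv : ∀ x ∈ S, x ∉ B → lapInf G.Adj v x = 0)
    (hB : ∀ x ∈ B, u x = v x) : ∀ x ∈ S, u x = v x := fun x hx =>
  le_antisymm
    (le_of_lapInf_nonneg_of_lapInf_nonpos hS hreach (fun x hx hxB => (hu x hx hxB).ge)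
      (fun x hx hxB => (hv x hx hxB).le) (fun x hx => (hB x hx).le) x hx)
    (le_of_lapInf_nonneg_of_lapInf_nonpos hS hreach (fun x hx hxB => (hv x hx hxB).ge)
      (fun x hx hxB => (hu x hx hxB).le) (fun x hx => (hB x hx).ge) x hx)

theorem lapInf_eq_zero_of_tendsto {x : V} {u : V → ℝ} {uk : ℕ → V → ℝ} {pk : ℕ → ℝ}
    (hpk : Tendsto pk atTop atTop)
    (hx : Tendsto (fun k => uk k x) atTop (𝓝 (u x)))
    (hnbr : ∀ y, G.Adj x y → Tendsto (fun k => uk k y) atTop (𝓝 (u y)))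
    (hEL : ∀ᶠ k in atTop, ∑ y ∈ G.neighborFinset x,
      (uk k y - uk k x) * |uk k y - uk k x| ^ (pk k - 2) = 0) :
    lapInf G.Adj u x = 0 := by
  by_cases hisol : ∀ y, ¬G.Adj x y
  · simp [lapInf, hisol]
  obtain ⟨y₀, hy₀⟩ := not_forall_not.1 hisol
  obtain ⟨ymax, ymin, hymax, hymin, hbounds, hlap⟩ := exists_lapInf_eq u hy₀
  have he : Tendsto (fun k => pk k - 2) atTop atTop := tendsto_atTop_add_const_right _ (-2) hpk
  have hconv : ∀ y ∈ G.neighborFinset x,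
      Tendsto (fun k => uk k y - uk k x) atTop (𝓝 (u y - u x)) := fun y hy =>
    (hnbr y ((G.mem_neighborFinset x y).1 hy)).sub hx
  have hmax := add_nonpos_of_sum_mul_abs_rpow_eq_zero he hconv hEL
    ((G.mem_neighborFinset x ymax).2 hymax) (b := u ymin - u x)
    fun y hy => sub_le_sub_right (hbounds y ((G.mem_neighborFinset x y).1 hy)).1 _
  have hmin := add_nonpos_of_sum_mul_abs_rpow_eq_zero (a := fun k y => -(uk k y - uk k x)) he
    (fun y hy => (hconv y hy).neg)
    (hEL.mono fun k hk => by simp only [abs_neg, neg_mul, Finset.sum_neg_distrib, hk, neg_zero])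
    ((G.mem_neighborFinset x ymin).2 hymin) (b := -(u ymax - u x))
    fun y hy => neg_le_neg (sub_le_sub_right (hbounds y ((G.mem_neighborFinset x y).1 hy)).2 _)
  linarith

end SimpleGraph

theorem psi_injective (i : Fin 3) : Function.Injective (psi i) := fun a b h => by
  simpa [psi] using h

theorem psi_q_self (i : Fin 3) : psi i (q i) = q i := by simp [psi]

theorem psi_q_comm (i j : Fin 3) : psi i (q j) = psi j (q i) := by
  simp only [psi, smul_sub]
  module

theorem psiW_replicate_q (n : ℕ) (i : Fin 3) : psiW (List.replicate n i) (q i) = q i := by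
  induction n with
  | zero => rfl
  | succ n ih =>
    show psi i (psiW (List.replicate n i) (q i)) = q i
    rw [ih, psi_q_self]

theorem q_mem_V0 (i : Fin 3) : q i ∈ V0 := by
  fin_cases i <;> simp [V0]

theorem mem_Vn_iff {n : ℕ} {x : ℝ × ℝ} :
    x ∈ Vn n ↔ ∃ w : List (Fin 3), w.length = n ∧ x ∈ psiW w '' V0 := by
  simp [Vn]

theorem q_mem_Vn (n : ℕ) (i : Fin 3) : q i ∈ Vn n :=
  mem_Vn_iff.2 ⟨List.replicate n i, by simp, q i, q_mem_V0 i, psiW_replicate_q n i⟩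

theorem V0_subset_Vn (n : ℕ) : V0 ⊆ Vn n := by
  rintro x (rfl | rfl | rfl) <;> exact q_mem_Vn n _

theorem Vn_finite (n : ℕ) : (Vn n).Finite :=
  (List.finite_length_eq (Fin 3) n).biUnion fun _ _ =>
    (((Set.finite_singleton _).insert _).insert _).image _

theorem Vn_succ (n : ℕ) : Vn (n + 1) = ⋃ i : Fin 3, psi i '' Vn n := by
  ext x
  simp only [Set.mem_iUnion, mem_Vn_iff (n := n + 1)]
  constructor
  · rintro ⟨_ | ⟨i, w⟩, hw, z, hz, rfl⟩
    · simp at hw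
    exact ⟨i, psiW w z, mem_Vn_iff.2 ⟨w, by simpa using hw, z, hz, rfl⟩, rfl⟩
  · rintro ⟨i, y, hy, rfl⟩
    obtain ⟨w, hw, z, hz, rfl⟩ := mem_Vn_iff.1 hy
    exact ⟨i :: w, by simpa using hw, z, hz, rfl⟩

theorem adjN_symm {n : ℕ} {x y : ℝ × ℝ} (h : adjN n x y) : adjN n y x :=
  let ⟨hne, w, hw, hx, hy⟩ := h
  ⟨hne.symm, w, hw, hy, hx⟩

theorem adjN_mem_Vn {n : ℕ} {x y : ℝ × ℝ} (h : adjN n x y) : y ∈ Vn n :=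
  let ⟨_, w, hw, _, hy⟩ := h
  mem_Vn_iff.2 ⟨w, hw, hy⟩

theorem adjN_psi {n : ℕ} {x y : ℝ × ℝ} (i : Fin 3) (h : adjN n x y) :
    adjN (n + 1) (psi i x) (psi i y) := by
  obtain ⟨hne, w, hw, ⟨a, ha, rfl⟩, ⟨b, hb, rfl⟩⟩ := h
  exact ⟨(psi_injective i).ne hne, i :: w, by simp [hw], ⟨a, ha, rfl⟩, ⟨b, hb, rfl⟩⟩

theorem reflTransGen_adjN_q_zero {n : ℕ} :
    ∀ x ∈ Vn n, Relation.ReflTransGen (adjN n) x (q 0) := by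
  induction n with
  | zero =>
    intro x hx
    obtain ⟨w, hw, a, ha, rfl⟩ := mem_Vn_iff.1 hx
    obtain rfl := List.length_eq_zero_iff.1 hw
    by_cases h : a = q 0
    · exact h ▸ Relation.ReflTransGen.refl
    · exact .single ⟨h, [], rfl, ⟨a, ha, rfl⟩, ⟨q 0, q_mem_V0 0, rfl⟩⟩
  | succ n ih =>
    -- `ψᵢ(Vⁿ)` is connected to `ψᵢ(q₀) = ψ₀(qᵢ)`, which lies in `ψ₀(Vⁿ)`, connected to `q₀`.
    have hcopy : ∀ z ∈ Vn n, ∀ i, Relation.ReflTransGen (adjN (n + 1)) (psi i z) (psi i (q 0)) :=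
      fun z hz i => (ih z hz).lift (psi i) fun _ _ => adjN_psi i
    intro x hx
    rw [Vn_succ] at hx
    obtain ⟨i, z, hz, rfl⟩ := Set.mem_iUnion.1 hx
    refine (hcopy z hz i).trans ?_
    rw [psi_q_comm i 0, ← psi_q_self 0]
    exact hcopy (q i) (q_mem_Vn n i) 0

def gasketGraph (n : ℕ) : SimpleGraph (ℝ × ℝ) where
  Adj := adjN n
  symm := ⟨fun _ _ => adjN_symm⟩
  loopless := ⟨fun _ h => h.1 rfl⟩

instance (n : ℕ) : (gasketGraph n).LocallyFinite := fun _ =>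
  ((Vn_finite n).subset fun _ => adjN_mem_Vn).fintype

theorem gasketGraph_adj_mem {n : ℕ} :
    ∀ z ∈ (Vn_finite n).toFinset, ∀ y, (gasketGraph n).Adj z y → y ∈ (Vn_finite n).toFinset :=
  fun _ _ _ h => (Vn_finite n).mem_toFinset.2 (adjN_mem_Vn h)

theorem Ip_eq_pEnergy (n : ℕ) {p : ℝ} (hp : p ≠ 0) (u : ℝ × ℝ → ℝ) :
    Ip n p u = (gasketGraph n).pEnergy (Vn_finite n).toFinset p u ^ p⁻¹ / deltaN n := by
  have hδ : 0 < deltaN n := by unfold deltaN; positivity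
  have hsum : ∑' x : Vn n, ∑' y : {y // adjN n x.1 y}, |(u y.1 - u x.1) / deltaN n| ^ p =
      (gasketGraph n).pEnergy (Vn_finite n).toFinset p u / deltaN n ^ p := by
    refine (tsum_subtype_eq_sum (P := (· ∈ Vn n)) _ (fun x => (Vn_finite n).mem_toFinset.symm)
      fun x => ∑' y : {y // adjN n x y}, |(u y - u x) / deltaN n| ^ p).trans ?_
    rw [SimpleGraph.pEnergy, Finset.sum_div]
    refine Finset.sum_congr rfl fun x _ => ?_
    rw [Finset.sum_div]
    refine (tsum_subtype_eq_sum (P := adjN n x) _ ((gasketGraph n).mem_neighborFinset x · |>.symm)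
      fun y => |(u y - u x) / deltaN n| ^ p).trans (Finset.sum_congr rfl fun y _ => ?_)
    rw [abs_div, abs_of_pos hδ, Real.div_rpow (abs_nonneg _) hδ.le]
  rw [Ip, hsum, Real.div_rpow SimpleGraph.pEnergy_nonneg (by positivity), one_div,
    Real.rpow_rpow_inv hδ.le hp]

def IsIpMinimizer (n : ℕ) (p : ℝ) (g u : ℝ × ℝ → ℝ) : Prop :=
  (∀ x ∈ V0, u x = g x) ∧ ∀ w : ℝ × ℝ → ℝ, (∀ x ∈ V0, w x = g x) → Ip n p u ≤ Ip n p w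

namespace IsIpMinimizer

variable {n : ℕ} {p : ℝ} {g u : ℝ × ℝ → ℝ}

theorem pEnergy_le (hu : IsIpMinimizer n p g u) (hp : 0 < p) {w : ℝ × ℝ → ℝ}
    (hw : ∀ x ∈ V0, w x = g x) :
    (gasketGraph n).pEnergy (Vn_finite n).toFinset p u ≤
      (gasketGraph n).pEnergy (Vn_finite n).toFinset p w := by
  have h := hu.2 w hw
  rw [Ip_eq_pEnergy n hp.ne', Ip_eq_pEnergy n hp.ne',
    div_le_div_iff_of_pos_right (by unfold deltaN; positivity),
    Real.rpow_le_rpow_iff SimpleGraph.pEnergy_nonneg SimpleGraph.pEnergy_nonneg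
      (inv_pos.2 hp)] at h
  exact h

theorem abs_sub_le (hu : IsIpMinimizer n p g u) (hp : 1 ≤ p) {x y : ℝ × ℝ}
    (hxy : adjN n x y) :
    |u y - u x| ≤ (gasketGraph n).pEnergy (Vn_finite n).toFinset 1 g := by
  have hp0 : 0 < p := by linarith
  calc |u y - u x|
      ≤ (gasketGraph n).pEnergy (Vn_finite n).toFinset p u ^ p⁻¹ :=
        SimpleGraph.abs_sub_le_pEnergy_rpow hp0
          ((Vn_finite n).mem_toFinset.2 (adjN_mem_Vn (adjN_symm hxy))) hxy
    _ ≤ (gasketGraph n).pEnergy (Vn_finite n).toFinset p g ^ p⁻¹ := by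
        gcongr
        · exact SimpleGraph.pEnergy_nonneg
        · exact hu.pEnergy_le hp0 fun _ _ => rfl
    _ ≤ _ := SimpleGraph.pEnergy_rpow_le_pEnergy_one hp

theorem sum_mul_abs_rpow_eq_zero (hu : IsIpMinimizer n p g u) (hp : 1 < p) {x : ℝ × ℝ}
    (hx : x ∈ Vn n \ V0) :
    ∑ y ∈ (gasketGraph n).neighborFinset x, (u y - u x) * |u y - u x| ^ (p - 2) = 0 :=
  SimpleGraph.sum_mul_abs_rpow_eq_zero_of_forall_pEnergy_le gasketGraph_adj_mem hp
    ((Vn_finite n).mem_toFinset.2 hx.1) fun t => hu.pEnergy_le (by linarith) fun z hz => by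
      simp [ne_of_mem_of_not_mem hz hx.2, hu.1 z hz]

end IsIpMinimizer

theorem exists_bound_of_isIpMinimizer (n : ℕ) (g : ℝ × ℝ → ℝ) {z : ℝ × ℝ} (hz : z ∈ Vn n) :
    ∃ C, ∀ p u, 1 ≤ p → IsIpMinimizer n p g u → |u z| ≤ C := by
  obtain ⟨k, hk⟩ := exists_abs_sub_le_of_reflTransGen (reflTransGen_adjN_q_zero z hz)
  refine ⟨|g (q 0)| + k * (gasketGraph n).pEnergy (Vn_finite n).toFinset 1 g,
    fun p u hp hu => ?_⟩
  have := hk u _ fun a b hab => hu.abs_sub_le hp hab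
  rw [hu.1 _ (q_mem_V0 0)] at this
  linarith [abs_sub_abs_le_abs_sub (u z) (g (q 0))]

theorem eq_of_lapInf_eq_zero_s18 {n : ℕ} {u v : ℝ × ℝ → ℝ}
    (hu : ∀ x ∈ Vn n \ V0, lapInf (adjN n) u x = 0) (hv : ∀ x ∈ Vn n \ V0, lapInf (adjN n) v x = 0)
    (huv : ∀ x ∈ V0, u x = v x) (x : ℝ × ℝ) (hx : x ∈ Vn n) : u x = v x :=
  have hS := fun x => (Vn_finite n).mem_toFinset (a := x)
  SimpleGraph.eq_of_lapInf_eq_zero (G := gasketGraph n) gasketGraph_adj_mem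
    (fun x hx => ⟨q 0, q_mem_V0 0, reflTransGen_adjN_q_zero x ((hS x).1 hx)⟩)
    (fun x hx hxB => hu x ⟨(hS x).1 hx, hxB⟩) (fun x hx hxB => hv x ⟨(hS x).1 hx, hxB⟩) huv x
    ((hS x).2 hx)

theorem eqOn_V0_and_lapInf_eq_zero_of_tendsto {n : ℕ} {g v : ℝ × ℝ → ℝ} {pk : ℕ → ℝ}
    {uk : ℕ → ℝ × ℝ → ℝ} (hpk : Tendsto pk atTop atTop)
    (hmin : ∀ᶠ k in atTop, IsIpMinimizer n (pk k) g (uk k))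
    (hv : ∀ z ∈ Vn n, Tendsto (fun k => uk k z) atTop (𝓝 (v z))) :
    (∀ z ∈ V0, v z = g z) ∧ ∀ z ∈ Vn n \ V0, lapInf (adjN n) v z = 0 := by
  refine ⟨fun z hz => tendsto_nhds_unique (hv z (V0_subset_Vn n hz))
    (tendsto_const_nhds.congr' (hmin.mono fun k hk => (hk.1 z hz).symm)), fun z hz => ?_⟩
  exact SimpleGraph.lapInf_eq_zero_of_tendsto (G := gasketGraph n) hpk (hv z hz.1)
    (fun y hy => hv y (adjN_mem_Vn hy))
    ((hmin.and (hpk.eventually_gt_atTop 1)).mono fun k hk => hk.1.sum_mul_abs_rpow_eq_zero hk.2 hz)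

/-- The `p`-harmonic functions on `Vⁿ` converge, as `p → ∞`, to the unique
infinity harmonic function (the AMLE) with boundary data `g`. -/
theorem stmt18 (n : ℕ) (g : ℝ × ℝ → ℝ) (up : ℝ → ℝ × ℝ → ℝ)
    (hup : ∀ p : ℝ, 1 ≤ p → (∀ x ∈ V0, up p x = g x) ∧
      ∀ w : ℝ × ℝ → ℝ, (∀ x ∈ V0, w x = g x) → Ip n p (up p) ≤ Ip n p w)
    (un : ℝ × ℝ → ℝ) (hunb : ∀ x ∈ V0, un x = g x)
    (hun : ∀ x ∈ Vn n \ V0, lapInf (adjN n) un x = 0) :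
    ∀ x ∈ Vn n, Filter.Tendsto (fun p => up p x) Filter.atTop (nhds (un x)) := by
  intro x hx
  refine tendsto_of_subseq_tendsto fun ns hns => ?_
  have hmin : ∀ᶠ k in atTop, IsIpMinimizer n (ns k) g (up (ns k)) :=
    (hns.eventually_ge_atTop 1).mono fun k hk => hup _ hk
  obtain ⟨φ, hφ, v, hv⟩ := exists_subseq_tendsto_of_bounded (S := (Vn_finite n).toFinset)
    (f := fun k => up (ns k)) fun z hz => by
      obtain ⟨C, hC⟩ := exists_bound_of_isIpMinimizer n g ((Vn_finite n).mem_toFinset.1 hz)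
      exact ⟨C, (hns.eventually_ge_atTop 1).mono fun k hk => hC _ _ hk (hup _ hk)⟩
  have hlim : ∀ z ∈ Vn n, Tendsto (fun k => up (ns (φ k)) z) atTop (𝓝 (v z)) :=
    fun z hz => hv z ((Vn_finite n).mem_toFinset.2 hz)
  obtain ⟨hvg, hvh⟩ := eqOn_V0_and_lapInf_eq_zero_of_tendsto (hns.comp hφ.tendsto_atTop)
    (hφ.tendsto_atTop.eventually hmin) hlim
  have hvun := eq_of_lapInf_eq_zero_s18 hvh hun fun z hz => (hvg z hz).trans (hunb z hz).symm
  exact ⟨φ, hvun x hx ▸ hlim x hx⟩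
end
end
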